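/- arXiv:1605.08945 — 10 statements merged into one kernel-verified Lean document; each statement's English description precedes it below -/
import Mathlib

section
/- Let G_• be a filtered group. For any face F of {0,1}^k of codimension r and any x ∈ G_r, the configuration [x]_F lies in HK^k(G_•). -/
open Subgroup

/-- A filtration on a group `G`: a chain `G = G₀ ⊇ G₁ ⊇ ...` of subgroups with
`[Gᵢ, Gⱼ] ⊆ G_{i+j}` for all `i j`. -/
structure IsGroupFiltration {G : Type*} [Group G] (Gf : ℕ → Subgroup G) : Prop where
  top : Gf 0 = ⊤
  mono : ∀ i, Gf (i + 1) ≤ Gf i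
  comm : ∀ i j, ⁅Gf i, Gf j⁆ ≤ Gf (i + j)

/-- The top vertex `(1,…,1)` of the discrete cube `{0,1}^k`. -/
def topVert (k : ℕ) : Fin k → Bool := fun _ => true

/-- The configuration `[x]_{F_S}`: equal to `x` on the upper face `F_S = {ω : ω ⊇ S}`
and the identity elsewhere. -/
def upperFaceConfig {G : Type*} [Group G] {k : ℕ} (S : Finset (Fin k)) (x : G) :
    (Fin k → Bool) → G :=
  fun ω => if ∀ i ∈ S, ω i = true then x else 1

/-- The Host–Kra cube group `HK^k(G_•)`: the subgroup of `G^{{0,1}^k}` generated by the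
configurations `[x]_{F_S}` with `x ∈ G_{|S|}`. -/
def hostKra {G : Type*} [Group G] (Gf : ℕ → Subgroup G) (k : ℕ) :
    Subgroup ((Fin k → Bool) → G) :=
  Subgroup.closure { c | ∃ (S : Finset (Fin k)) (x : G), x ∈ Gf S.card ∧ c = upperFaceConfig S x }

section

open Finset Function

variable {G : Type*} [Group G] {k : ℕ}

/-- The configuration `[x]_F` on the face `F = {ω : ω i = ε i for all i ∈ T}` of `{0,1}^k`. -/
def faceConfig (T : Finset (Fin k)) (ε : Fin k → Bool) (x : G) : (Fin k → Bool) → G :=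
  fun ω => if ∀ i ∈ T, ω i = ε i then x else 1

theorem faceConfig_eq_upperFaceConfig {T : Finset (Fin k)} {ε : Fin k → Bool}
    (hε : ∀ i ∈ T, ε i = true) (x : G) : faceConfig T ε x = upperFaceConfig T x := by
  funext ω
  refine if_congr (forall₂_congr fun i hi => ?_) rfl rfl
  rw [hε i hi]

/-- A face is the disjoint union of its two halves `ω i = false` and `ω i = true`. -/
theorem faceConfig_eq_mul {T : Finset (Fin k)} {i : Fin k} (hi : i ∉ T) (ε : Fin k → Bool)
    (x : G) :
    faceConfig T ε x =
      faceConfig (insert i T) (update ε i false) x * faceConfig (insert i T) (update ε i true) x := by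
  funext ω
  have hT : ∀ b, (∀ j ∈ T, ω j = update ε i b j) ↔ ∀ j ∈ T, ω j = ε j := fun b =>
    forall₂_congr fun j hj => by rw [update_of_ne (ne_of_mem_of_not_mem hj hi)]
  simp only [faceConfig, Pi.mul_apply, forall_mem_insert, update_self, hT]
  split_ifs <;> cases ω i <;> simp_all

theorem faceConfig_eq_mul_inv {T : Finset (Fin k)} {ε : Fin k → Bool} {i : Fin k} (hi : i ∈ T)
    (hεi : ε i = false) (x : G) :
    faceConfig T ε x = faceConfig (T.erase i) ε x * (faceConfig T (update ε i true) x)⁻¹ := by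
  have hsplit := faceConfig_eq_mul (notMem_erase i T) ε x
  rw [insert_erase hi, update_eq_self_iff.2 hεi.symm] at hsplit
  rw [hsplit, mul_inv_cancel_right]

/-- Induction on the number of coordinates fixed to `0`: each such coordinate is traded, via
`faceConfig_eq_mul_inv`, for a face of smaller codimension and a face with one more coordinate
fixed to `1`. -/
theorem faceConfig_mem_hostKra {Gf : ℕ → Subgroup G} (hGf : Antitone Gf) (T : Finset (Fin k))
    (ε : Fin k → Bool) {x : G} (hx : x ∈ Gf #T) : faceConfig T ε x ∈ hostKra Gf k := by
  by_cases h : ∃ i ∈ T, ε i = false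
  · obtain ⟨i, hiT, hεi⟩ := h
    have hx' : x ∈ Gf #(T.erase i) := hGf card_erase_le hx
    rw [faceConfig_eq_mul_inv hiT hεi]
    exact mul_mem (faceConfig_mem_hostKra hGf (T.erase i) ε hx')
      (inv_mem (faceConfig_mem_hostKra hGf T (update ε i true) hx))
  · push Not at h
    rw [faceConfig_eq_upperFaceConfig fun i hi => Bool.not_eq_false _ ▸ h i hi]
    exact Subgroup.subset_closure ⟨T, x, hx, rfl⟩
termination_by #(T.filter (ε · = false))
decreasing_by
  · rw [filter_erase]
    exact card_erase_lt_of_mem (mem_filter.2 ⟨hiT, hεi⟩)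
  · refine card_lt_card <| (ssubset_iff_of_subset fun j hj => ?_).2
      ⟨i, mem_filter.2 ⟨hiT, hεi⟩, by simp⟩
    rcases eq_or_ne j i with rfl | hji
    · simp at hj
    · simpa [update_of_ne hji] using hj

end

/-- For any face `F` of `{0,1}^k` of codimension `r` (obtained by fixing the
coordinates in a set `T` of size `r` to the values `ε`) and any `x ∈ G_r`, the configuration
`[x]_F` lies in `HK^k(G_•)`. -/
theorem face_mem_hostKra {G : Type*} [Group G] (Gf : ℕ → Subgroup G)
    (hf : IsGroupFiltration Gf) (k : ℕ) (T : Finset (Fin k)) (ε : Fin k → Bool)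
    (x : G) (hx : x ∈ Gf T.card) :
    (fun ω : Fin k → Bool => if ∀ i ∈ T, ω i = ε i then x else 1) ∈ hostKra Gf k :=
  faceConfig_mem_hostKra (antitone_nat_of_succ_le hf.mono) T ε hx
end

section
/- Let G_• be a filtered group, k ≥ 0, and fix an ordering S_1 = ∅, ..., S_{2^k} = [k] of the subsets of [k] that respects inclusion. Then every configuration (g_ω) ∈ G^{{0,1}^k} has a unique representation as the ordered product ∏_{i=1}^{2^k} [x_i]_{F_{S_i}} with x_i ∈ G, and (g_ω) lies in HK^k(G_•) if and only if x_i ∈ G_{|S_i|} for all i. -/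
open Subgroup

/-!
Evaluating `∏ᵢ [xᵢ]_{F_{Sᵢ}}` at the vertex of `S_j`, only factors with `Sᵢ ⊆ S_j`, hence `i ≤ j`,
contribute, and the last of them is `x_j`. So the coefficients can be peeled off one at a time from
the left, which gives existence and uniqueness. For membership, let `T_j` be the subgroup generated
by the generators `[x]_{F_{Sᵢ}}` with `i ≥ j`. Conjugating such a generator by `[z]_{F_{S_j}}`
multiplies it by `[⁅x⁻¹, z⁆]_{F_{Sᵢ ∪ S_j}}`, again a generator of index `≥ i`, so `[G_{|S_j|}]_{F_{S_j}}`
normalizes `T_{j+1}` and `T_j = [G_{|S_j|}]_{F_{S_j}} · T_{j+1}`. Descending induction shows that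
`HK^k = T_0` consists of ordered products with `xᵢ ∈ G_{|Sᵢ|}`.
-/

open Function

open scoped commutatorElement

theorem List.prod_ofFn_eq_mul_prod_ofFn_update {M : Type*} [Monoid M] :
    ∀ {n : ℕ} (f : Fin n → M) (j : Fin n), (∀ i < j, f i = 1) →
      (List.ofFn f).prod = f j * (List.ofFn (update f j 1)).prod
  | _ + 1, f, j, h => by
    rw [List.ofFn_succ, List.ofFn_succ]
    cases j using Fin.cases with
    | zero => simp
    | succ j =>
      have h0 : f 0 = 1 := h 0 (Fin.succ_pos j)
      have ih := prod_ofFn_eq_mul_prod_ofFn_update (fun i => f i.succ) j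
        fun i hi => h _ (Fin.succ_lt_succ_iff.mpr hi)
      rw [List.prod_cons, List.prod_cons, h0, one_mul, update_of_ne (Fin.succ_ne_zero j).symm, h0,
        one_mul, ih]
      congr 3
      funext i
      simp [update_apply]

theorem IsGroupFiltration.commutator_mem {G : Type*} [Group G] {Gf : ℕ → Subgroup G}
    (hf : IsGroupFiltration Gf) {a b c : ℕ} (hc : c ≤ a + b) {x y : G} (hx : x ∈ Gf a)
    (hy : y ∈ Gf b) : ⁅x, y⁆ ∈ Gf c :=
  antitone_nat_of_succ_le hf.mono hc (hf.comm a b (commutator_mem_commutator hx hy))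

section

variable {G : Type*} [Group G] {k N : ℕ}

def cubeVertex (T : Finset (Fin k)) : Fin k → Bool := fun i => decide (i ∈ T)

theorem cubeVertex_surjective : Surjective (cubeVertex (k := k)) := fun ω =>
  ⟨Finset.univ.filter (ω · = true), funext fun i => by simp [cubeVertex]⟩

theorem upperFaceConfig_cubeVertex (S T : Finset (Fin k)) (x : G) :
    upperFaceConfig S x (cubeVertex T) = if S ⊆ T then x else 1 := by
  simp [upperFaceConfig, cubeVertex, Finset.subset_iff]

@[simp]
theorem upperFaceConfig_one (S : Finset (Fin k)) : upperFaceConfig S (1 : G) = 1 :=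
  funext fun _ => ite_self 1

theorem upperFaceConfig_mul (S : Finset (Fin k)) (x y : G) :
    upperFaceConfig S (x * y) = upperFaceConfig S x * upperFaceConfig S y := by
  funext ω
  simp only [upperFaceConfig, Pi.mul_apply]
  split_ifs <;> simp

theorem upperFaceConfig_inv (S : Finset (Fin k)) (x : G) :
    upperFaceConfig S x⁻¹ = (upperFaceConfig S x)⁻¹ := by
  funext ω
  simp only [upperFaceConfig, Pi.inv_apply]
  split_ifs <;> simp

theorem upperFaceConfig_commutator (S T : Finset (Fin k)) (x y : G) :
    upperFaceConfig (S ∪ T) ⁅x, y⁆ = ⁅upperFaceConfig S x, upperFaceConfig T y⁆ := by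
  funext ω
  simp only [upperFaceConfig, commutatorElement_def, Pi.mul_apply, Pi.inv_apply,
    Finset.forall_mem_union]
  split_ifs <;> simp_all

def upperFaceHom (S : Finset (Fin k)) : G →* (Fin k → Bool) → G where
  toFun := upperFaceConfig S
  map_one' := upperFaceConfig_one S
  map_mul' := upperFaceConfig_mul S

def faceProd (e : Fin N → Finset (Fin k)) (x : Fin N → G) : (Fin k → Bool) → G :=
  (List.ofFn fun i => upperFaceConfig (e i) (x i)).prod

section FaceProd

variable {e : Fin N → Finset (Fin k)}

theorem faceProd_one : faceProd e (1 : Fin N → G) = 1 := by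
  simp [faceProd]

theorem faceProd_eq_mul_faceProd_update {x : Fin N → G} {j : Fin N} (hx : ∀ i < j, x i = 1) :
    faceProd e x = upperFaceConfig (e j) (x j) * faceProd e (update x j 1) := by
  rw [faceProd, List.prod_ofFn_eq_mul_prod_ofFn_update _ j fun i hi => by simp [hx i hi]]
  congr 3
  funext i
  rcases eq_or_ne i j with rfl | hij <;> simp [update_of_ne, *]

theorem faceProd_update_eq_mul {x : Fin N → G} {j : Fin N} (hx : ∀ i ≤ j, x i = 1) (z : G) :
    faceProd e (update x j z) = upperFaceConfig (e j) z * faceProd e x := by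
  rw [faceProd_eq_mul_faceProd_update (j := j) fun i hi => by simp [hi.ne, hx i hi.le], update_idem,
    update_self, update_eq_self_iff.mpr (hx j le_rfl).symm]

variable (he : ∀ i j, e i ⊆ e j → i ≤ j)
include he

theorem faceProd_cubeVertex_eq_one {x : Fin N → G} {j : Fin N} (hx : ∀ i ≤ j, x i = 1) :
    faceProd e x (cubeVertex (e j)) = 1 := by
  simp only [faceProd, Pi.list_prod_apply, List.map_ofFn]
  refine List.prod_eq_one fun a ha => ?_
  obtain ⟨i, rfl⟩ := List.mem_ofFn.mp ha
  rw [comp_apply, upperFaceConfig_cubeVertex]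
  split_ifs with hsub
  · exact hx i (he i j hsub)
  · rfl

theorem faceProd_cubeVertex {x : Fin N → G} {j : Fin N} (hx : ∀ i < j, x i = 1) :
    faceProd e x (cubeVertex (e j)) = x j := by
  rw [faceProd_eq_mul_faceProd_update hx, Pi.mul_apply, upperFaceConfig_cubeVertex,
    if_pos subset_rfl, faceProd_cubeVertex_eq_one he, mul_one]
  intro i hi
  rcases hi.lt_or_eq with hi | rfl
  · simp [hi.ne, hx i hi]
  · simp

theorem faceProd_injective : Injective (faceProd e : (Fin N → G) → (Fin k → Bool) → G) := by
  suffices key : ∀ j ≤ N, ∀ x y : Fin N → G, (∀ i : Fin N, i.val < j → x i = 1 ∧ y i = 1) →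
      faceProd e x = faceProd e y → x = y from
    fun x y => key 0 N.zero_le x y (by simp)
  intro j hj
  induction hj using Nat.decreasingInduction with
  | self => exact fun x y h _ => funext fun i => (h i i.isLt).1.trans (h i i.isLt).2.symm
  | of_succ j hj ih =>
    intro x y h hxy
    let j' : Fin N := ⟨j, hj⟩
    have hx : ∀ i < j', x i = 1 := fun i hi => (h i hi).1
    have hy : ∀ i < j', y i = 1 := fun i hi => (h i hi).2
    have hxy' : x j' = y j' := by
      rw [← faceProd_cubeVertex he hx, hxy, faceProd_cubeVertex he hy]
    have htail : update x j' 1 = update y j' 1 := by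
      refine ih _ _ (fun i hi => ?_) ?_
      · rcases (Nat.lt_succ_iff_lt_or_eq.mp hi) with hi | hi
        · have hij : i ≠ j' := Fin.ne_of_lt hi
          simp [update_of_ne hij, hx i hi, hy i hi]
        · simp [show i = j' from Fin.ext hi]
      · rwa [faceProd_eq_mul_faceProd_update hx, faceProd_eq_mul_faceProd_update hy, hxy',
          mul_right_inj] at hxy
    rw [← update_eq_self j' x, ← update_idem (1 : G), htail, update_idem, hxy', update_eq_self]

theorem exists_faceProd_eq (hsurj : Surjective e) (g : (Fin k → Bool) → G) :
    ∃ x, g = faceProd e x := by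
  suffices key : ∀ j ≤ N, ∀ g : (Fin k → Bool) → G,
      (∀ i : Fin N, i.val < j → g (cubeVertex (e i)) = 1) →
      ∃ x : Fin N → G, (∀ i : Fin N, i.val < j → x i = 1) ∧ g = faceProd e x by
    obtain ⟨x, -, hx⟩ := key 0 N.zero_le g (by simp)
    exact ⟨x, hx⟩
  intro j hj
  induction hj using Nat.decreasingInduction with
  | self =>
    refine fun g hg => ⟨1, fun _ _ => rfl, funext fun ω => ?_⟩
    obtain ⟨T, rfl⟩ := cubeVertex_surjective ω
    obtain ⟨i, rfl⟩ := hsurj T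
    rw [faceProd_one, hg i i.isLt, Pi.one_apply]
  | of_succ j hj ih =>
    intro g hg
    let j' : Fin N := ⟨j, hj⟩
    set z := g (cubeVertex (e j'))
    obtain ⟨x, hx, hgx⟩ := ih (upperFaceConfig (e j') z⁻¹ * g) fun i hi => by
      rw [Pi.mul_apply, upperFaceConfig_cubeVertex]
      rcases Nat.lt_succ_iff_lt_or_eq.mp hi with hi | hi
      · rw [if_neg fun hsub => (he j' i hsub).not_gt hi, hg i hi, mul_one]
      · rw [show i = j' from Fin.ext hi, if_pos subset_rfl, inv_mul_cancel]
    refine ⟨update x j' z, fun i hi => ?_, ?_⟩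
    · rw [update_of_ne (Fin.ne_of_lt hi), hx i (Nat.lt_succ_of_lt hi)]
    · rw [faceProd_update_eq_mul fun i hi => hx i (Nat.lt_succ_of_le hi), ← hgx,
        upperFaceConfig_inv, mul_inv_cancel_left]

end FaceProd

section Membership

variable (Gf : ℕ → Subgroup G) (e : Fin N → Finset (Fin k))

def faceSubgroup (S : Finset (Fin k)) : Subgroup ((Fin k → Bool) → G) :=
  (Gf S.card).map (upperFaceHom S)

def tailHostKra (j : ℕ) : Subgroup ((Fin k → Bool) → G) :=
  closure {c | ∃ i : Fin N, j ≤ i.val ∧ c ∈ faceSubgroup Gf (e i)}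

variable {Gf e}

theorem mem_faceSubgroup {S : Finset (Fin k)} {c : (Fin k → Bool) → G} :
    c ∈ faceSubgroup Gf S ↔ ∃ x ∈ Gf S.card, upperFaceConfig S x = c :=
  mem_map

theorem hostKra_eq_tailHostKra_zero (hsurj : Surjective e) : hostKra Gf k = tailHostKra Gf e 0 := by
  refine congrArg Subgroup.closure (Set.ext fun c => ⟨?_, ?_⟩)
  · rintro ⟨S, x, hx, rfl⟩
    obtain ⟨i, rfl⟩ := hsurj S
    exact ⟨i, i.val.zero_le, mem_faceSubgroup.mpr ⟨x, hx, rfl⟩⟩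
  · rintro ⟨i, -, hc⟩
    obtain ⟨x, hx, rfl⟩ := mem_faceSubgroup.mp hc
    exact ⟨e i, x, hx, rfl⟩

theorem tailHostKra_self : tailHostKra Gf e N = ⊥ := by
  rw [tailHostKra, closure_eq_bot_iff]
  rintro c ⟨i, hi, -⟩
  exact absurd i.isLt hi.not_gt

theorem tailHostKra_eq_sup {j : ℕ} (hj : j < N) :
    tailHostKra Gf e j = faceSubgroup Gf (e ⟨j, hj⟩) ⊔ tailHostKra Gf e (j + 1) := by
  rw [tailHostKra, tailHostKra, ← closure_eq (faceSubgroup Gf _), ← Subgroup.closure_union]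
  congr 1
  ext c
  constructor
  · rintro ⟨i, hi, hc⟩
    rcases hi.eq_or_lt with hi | hi
    · exact Or.inl ((Fin.ext hi.symm : i = ⟨j, hj⟩) ▸ hc)
    · exact Or.inr ⟨i, hi, hc⟩
  · rintro (hc | ⟨i, hi, hc⟩)
    · exact ⟨_, le_rfl, hc⟩
    · exact ⟨i, Nat.le_of_succ_le hi, hc⟩

theorem upperFaceConfig_conj (S T : Finset (Fin k)) (z w : G) :
    upperFaceConfig S z * upperFaceConfig T w * (upperFaceConfig S z)⁻¹ =
      upperFaceConfig T w * upperFaceConfig (T ∪ S) ⁅w⁻¹, z⁆ := by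
  rw [upperFaceConfig_commutator, upperFaceConfig_inv, commutatorElement_def]
  group

theorem faceSubgroup_le_normalizer_tailHostKra (hf : IsGroupFiltration Gf)
    (he : ∀ i j, e i ⊆ e j → i ≤ j) (hsurj : Surjective e) {j : ℕ} (hj : j < N) :
    faceSubgroup Gf (e ⟨j, hj⟩) ≤ normalizer (tailHostKra Gf e (j + 1) : Set _) := by
  have hconj : ∀ a ∈ faceSubgroup Gf (e ⟨j, hj⟩), tailHostKra Gf e (j + 1) ≤
      (tailHostKra Gf e (j + 1)).comap (MulAut.conj a).toMonoidHom := by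
    intro a ha
    obtain ⟨z, hz, rfl⟩ := mem_faceSubgroup.mp ha
    refine closure_le _ |>.mpr ?_
    rintro c ⟨i, hi, hc⟩
    obtain ⟨w, hw, rfl⟩ := mem_faceSubgroup.mp hc
    obtain ⟨i', hi'⟩ := hsurj (e i ∪ e ⟨j, hj⟩)
    have hii' : i ≤ i' := he i i' (hi' ▸ Finset.subset_union_left)
    have hcomm : ⁅w⁻¹, z⁆ ∈ Gf (e i').card :=
      hf.commutator_mem (hi' ▸ Finset.card_union_le _ _) (inv_mem hw) hz
    simp only [coe_comap, MulEquiv.coe_toMonoidHom, Set.mem_preimage, MulAut.conj_apply,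
      SetLike.mem_coe, upperFaceConfig_conj, ← hi']
    exact mul_mem (subset_closure ⟨i, hi, mem_faceSubgroup.mpr ⟨w, hw, rfl⟩⟩)
      (subset_closure ⟨i', hi.trans hii', mem_faceSubgroup.mpr ⟨_, hcomm, rfl⟩⟩)
  intro a ha
  refine mem_normalizer_iff.mpr fun h => ⟨fun hh => hconj a ha hh, fun hh => ?_⟩
  simpa [mul_assoc] using hconj a⁻¹ (inv_mem ha) hh

theorem exists_faceProd_eq_of_mem_hostKra (hf : IsGroupFiltration Gf)
    (he : ∀ i j, e i ⊆ e j → i ≤ j) (hsurj : Surjective e) {g : (Fin k → Bool) → G}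
    (hg : g ∈ hostKra Gf k) : ∃ x : Fin N → G, (∀ i, x i ∈ Gf (e i).card) ∧ g = faceProd e x := by
  suffices key : ∀ j ≤ N, ∀ g ∈ tailHostKra Gf e j, ∃ x : Fin N → G,
      (∀ i, x i ∈ Gf (e i).card) ∧ (∀ i : Fin N, i.val < j → x i = 1) ∧ g = faceProd e x by
    obtain ⟨x, hx, -, hgx⟩ := key 0 N.zero_le g ((hostKra_eq_tailHostKra_zero (Gf := Gf) hsurj) ▸ hg)
    exact ⟨x, hx, hgx⟩
  intro j hj
  induction hj using Nat.decreasingInduction with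
  | self =>
    intro g hg
    rw [tailHostKra_self, mem_bot] at hg
    exact ⟨1, fun _ => one_mem _, fun _ _ => rfl, hg.trans faceProd_one.symm⟩
  | of_succ j hj ih =>
    intro g hg
    let j' : Fin N := ⟨j, hj⟩
    rw [← SetLike.mem_coe, tailHostKra_eq_sup hj, coe_mul_of_left_le_normalizer_right _ _
      (faceSubgroup_le_normalizer_tailHostKra hf he hsurj hj)] at hg
    obtain ⟨a, ha, h, hh, rfl⟩ := hg
    obtain ⟨z, hz, rfl⟩ := mem_faceSubgroup.mp ha
    obtain ⟨x, hxf, hx, rfl⟩ := ih h hh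
    refine ⟨update x j' z, fun i => ?_, fun i hi => ?_, ?_⟩
    · rcases eq_or_ne i j' with rfl | hij
      · rwa [update_self]
      · rw [update_of_ne hij]
        exact hxf i
    · rw [update_of_ne (Fin.ne_of_lt hi), hx i (Nat.lt_succ_of_lt hi)]
    · rw [faceProd_update_eq_mul fun i hi => hx i (Nat.lt_succ_of_le hi)]

theorem faceProd_mem_hostKra {x : Fin N → G} (hx : ∀ i, x i ∈ Gf (e i).card) :
    faceProd e x ∈ hostKra Gf k :=
  list_prod_mem fun c hc => by
    obtain ⟨i, rfl⟩ := List.mem_ofFn.mp hc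
    exact subset_closure ⟨e i, x i, hx i, rfl⟩

end Membership

end

/-- Fix an ordering `S_1 = ∅, …, S_{2^k} = [k]` of the subsets of `[k]`
respecting inclusion (given by a bijection `e`).  Every configuration `g ∈ G^{{0,1}^k}` has a
unique representation as the ordered product `∏ i, [x_i]_{F_{S_i}}`, and `g ∈ HK^k(G_•)` if
and only if `x_i ∈ G_{|S_i|}` for all `i`. -/
theorem hostKra_unique_factorization {G : Type*} [Group G] (Gf : ℕ → Subgroup G)
    (hf : IsGroupFiltration Gf) (k : ℕ) (e : Fin (2 ^ k) ≃ Finset (Fin k))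
    (he : ∀ i j, e i ⊆ e j → i ≤ j) (g : (Fin k → Bool) → G) :
    (∃! x : Fin (2 ^ k) → G,
        g = (List.ofFn fun i => upperFaceConfig (e i) (x i)).prod) ∧
    ∀ x : Fin (2 ^ k) → G,
      g = (List.ofFn fun i => upperFaceConfig (e i) (x i)).prod →
      (g ∈ hostKra Gf k ↔ ∀ i, x i ∈ Gf (e i).card) := by
  have hinj : Injective (faceProd (G := G) e) := faceProd_injective he
  refine ⟨?_, fun x hx => ⟨fun hg => ?_, fun hxf => hx ▸ faceProd_mem_hostKra hxf⟩⟩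
  · obtain ⟨x, hx⟩ := exists_faceProd_eq he e.surjective g
    exact ⟨x, hx, fun y hy => hinj (hy.symm.trans hx)⟩
  · obtain ⟨y, hyf, hy⟩ := exists_faceProd_eq_of_mem_hostKra hf he e.surjective hg
    rwa [hinj (hx.symm.trans hy)]
end

section
/- Let G_• be a filtered group of degree s and let k = s+1. If g, g' ∈ HK^k(G_•) satisfy g(ω) = g'(ω) for all ω ≠ (1,...,1), then g(1,...,1) = g'(1,...,1). -/
open Subgroup

/-!
Restricting a cube `g ∈ HK^{k+1}(G_•)` to the faces `ω₀ = 1` and `ω₀ = 0` gives cubes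
`g₁, g₀ ∈ HK^k(G_•)` with `g₁ g₀⁻¹ ∈ HK^k(G_{•+1})`, because `HK^k(G_•)` normalises
`HK^k(G_{•+1})`. If `g` is trivial off the top vertex then `g₀ = 1`, so induction on `k` gives
`g(1,…,1) ∈ G_k`. For `k = s + 1` this forces `g(1,…,1) = 1`; apply it to `g⁻¹ g'`.
-/

open scoped commutatorElement

namespace HostKra

variable {G : Type*} [Group G] {k : ℕ}

lemma upperFaceConfig_inv (S : Finset (Fin k)) (x : G) :
    (upperFaceConfig S x)⁻¹ = upperFaceConfig S x⁻¹ := by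
  funext ω
  simp only [Pi.inv_apply, upperFaceConfig]
  split <;> simp

lemma commutatorElement_upperFaceConfig (S T : Finset (Fin k)) (x y : G) :
    ⁅upperFaceConfig S x, upperFaceConfig T y⁆ = upperFaceConfig (S ∪ T) ⁅x, y⁆ := by
  funext ω
  simp only [commutatorElement_def, Pi.mul_apply, Pi.inv_apply, upperFaceConfig,
    Finset.forall_mem_union]
  by_cases hS : ∀ i ∈ S, ω i = true <;> by_cases hT : ∀ i ∈ T, ω i = true
  · rw [if_pos hS, if_pos hT, if_pos ⟨hS, hT⟩]
  · rw [if_pos hS, if_neg hT, if_neg (by tauto)]; group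
  · rw [if_neg hS, if_pos hT, if_neg (by tauto)]; group
  · rw [if_neg hS, if_neg hT, if_neg (by tauto)]; group

lemma upperFaceConfig_mem_hostKra {Gf : ℕ → Subgroup G} {S : Finset (Fin k)} {x : G}
    (hx : x ∈ Gf S.card) : upperFaceConfig S x ∈ hostKra Gf k :=
  subset_closure ⟨S, x, hx, rfl⟩

lemma apply_mem_of_mem_hostKra {Gf : ℕ → Subgroup G} (hanti : Antitone Gf)
    {g : (Fin k → Bool) → G} (hg : g ∈ hostKra Gf k) (ω : Fin k → Bool) : g ω ∈ Gf 0 := by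
  suffices hostKra Gf k ≤ (Gf 0).comap (Pi.evalMonoidHom (fun _ => G) ω) from this hg
  refine (closure_le _).mpr ?_
  rintro _ ⟨S, x, hx, rfl⟩
  simp only [SetLike.mem_coe, mem_comap, Pi.evalMonoidHom_apply, upperFaceConfig]
  split
  · exact hanti (Nat.zero_le _) hx
  · exact one_mem _

def faceRestrict (b : Bool) : ((Fin (k + 1) → Bool) → G) →* ((Fin k → Bool) → G) where
  toFun g ω := g (Fin.cons b ω)
  map_one' := rfl
  map_mul' _ _ := rfl

@[simp]
lemma faceRestrict_apply (b : Bool) (g : (Fin (k + 1) → Bool) → G) (ω : Fin k → Bool) :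
    faceRestrict b g ω = g (Fin.cons b ω) := rfl

lemma cons_eq_topVert_iff {b : Bool} {ω : Fin k → Bool} :
    (Fin.cons b ω : Fin (k + 1) → Bool) = topVert (k + 1) ↔ b = true ∧ ω = topVert k := by
  rw [← Fin.cons_self_tail (topVert (k + 1)), Fin.cons_inj]
  rfl

noncomputable def tailFace (S : Finset (Fin (k + 1))) : Finset (Fin k) :=
  S.preimage Fin.succ (Fin.succ_injective k).injOn

lemma card_tailFace_le (S : Finset (Fin (k + 1))) : (tailFace S).card ≤ S.card := by
  classical
  rw [tailFace, Finset.card_preimage]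
  exact Finset.card_filter_le _ _

lemma card_tailFace_lt {S : Finset (Fin (k + 1))} (h0 : 0 ∈ S) :
    (tailFace S).card < S.card := by
  classical
  rw [tailFace, Finset.card_preimage]
  refine Finset.card_lt_card (Finset.filter_ssubset.mpr ⟨0, h0, ?_⟩)
  rintro ⟨j, hj⟩
  exact Fin.succ_ne_zero j hj

lemma forall_mem_cons_eq_true_iff (S : Finset (Fin (k + 1))) (b : Bool) (ω : Fin k → Bool) :
    (∀ i ∈ S, (Fin.cons b ω : Fin (k + 1) → Bool) i = true) ↔
      (0 ∈ S → b = true) ∧ ∀ j ∈ tailFace S, ω j = true := by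
  simp [Fin.forall_fin_succ, tailFace]

lemma faceRestrict_upperFaceConfig {S : Finset (Fin (k + 1))} {b : Bool}
    (hb : 0 ∈ S → b = true) (x : G) :
    faceRestrict b (upperFaceConfig S x) = upperFaceConfig (tailFace S) x := by
  funext ω
  simp only [faceRestrict_apply, upperFaceConfig, forall_mem_cons_eq_true_iff, and_iff_right hb]

lemma faceRestrict_false_upperFaceConfig {S : Finset (Fin (k + 1))} (h0 : 0 ∈ S) (x : G) :
    faceRestrict false (upperFaceConfig S x) = 1 := by
  funext ω
  simp [upperFaceConfig, forall_mem_cons_eq_true_iff, h0]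

variable {Gf : ℕ → Subgroup G}

lemma faceRestrict_mem_hostKra (hanti : Antitone Gf) (b : Bool)
    {g : (Fin (k + 1) → Bool) → G} (hg : g ∈ hostKra Gf (k + 1)) :
    faceRestrict b g ∈ hostKra Gf k := by
  suffices hostKra Gf (k + 1) ≤ (hostKra Gf k).comap (faceRestrict b) from this hg
  refine (closure_le _).mpr ?_
  rintro _ ⟨S, x, hx, rfl⟩
  rw [SetLike.mem_coe, mem_comap]
  by_cases hb : 0 ∈ S ∧ b = false
  · rw [hb.2, faceRestrict_false_upperFaceConfig hb.1]
    exact one_mem _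
  · rw [faceRestrict_upperFaceConfig (by simpa using hb)]
    exact upperFaceConfig_mem_hostKra (hanti (card_tailFace_le S) hx)

lemma conj_upperFaceConfig_mem_hostKra_succ (hanti : Antitone Gf)
    (hcomm : ∀ i j, ⁅Gf i, Gf j⁆ ≤ Gf (i + j)) {T : Finset (Fin k)} {y : G}
    (hy : y ∈ Gf T.card) {n : (Fin k → Bool) → G} (hn : n ∈ hostKra (fun i => Gf (i + 1)) k) :
    upperFaceConfig T y * n * (upperFaceConfig T y)⁻¹ ∈ hostKra (fun i => Gf (i + 1)) k := by
  suffices hostKra (fun i => Gf (i + 1)) k ≤ (hostKra (fun i => Gf (i + 1)) k).comap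
      (MulAut.conj (upperFaceConfig T y)).toMonoidHom from this hn
  refine (closure_le _).mpr ?_
  rintro _ ⟨S, x, hx, rfl⟩
  have hyx : ⁅y, x⁆ ∈ Gf ((T ∪ S).card + 1) :=
    hanti (by have := Finset.card_union_le T S; omega)
      (hcomm _ _ (commutator_mem_commutator hy hx))
  -- `c m c⁻¹ = ⁅c, m⁆ m`, and `⁅c, m⁆` is again a generator, one level deeper.
  rw [SetLike.mem_coe, mem_comap, MulEquiv.coe_toMonoidHom, MulAut.conj_apply,
    ← inv_mul_cancel_right (_ * _ * _) (upperFaceConfig S x), ← commutatorElement_def,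
    commutatorElement_upperFaceConfig]
  exact mul_mem (upperFaceConfig_mem_hostKra hyx) (upperFaceConfig_mem_hostKra hx)

lemma hostKra_le_normalizer_hostKra_succ (hanti : Antitone Gf)
    (hcomm : ∀ i j, ⁅Gf i, Gf j⁆ ≤ Gf (i + j)) :
    hostKra Gf k ≤ normalizer (hostKra (fun i => Gf (i + 1)) k : Set ((Fin k → Bool) → G)) := by
  refine (closure_le _).mpr ?_
  rintro _ ⟨T, y, hy, rfl⟩
  refine mem_normalizer_iff.mpr fun n => ⟨conj_upperFaceConfig_mem_hostKra_succ hanti hcomm hy,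
    fun hn => ?_⟩
  have := conj_upperFaceConfig_mem_hostKra_succ hanti hcomm (inv_mem hy) hn
  rw [← upperFaceConfig_inv, inv_inv] at this
  simpa only [mul_assoc, inv_mul_cancel_left, inv_mul_cancel, mul_one] using this

lemma faceRestrict_true_mul_inv_false_mem (hanti : Antitone Gf)
    (hcomm : ∀ i j, ⁅Gf i, Gf j⁆ ≤ Gf (i + j)) {g : (Fin (k + 1) → Bool) → G}
    (hg : g ∈ hostKra Gf (k + 1)) :
    faceRestrict true g * (faceRestrict false g)⁻¹ ∈ hostKra (fun i => Gf (i + 1)) k := by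
  have conj_mem {a n} (ha : a ∈ hostKra Gf (k + 1)) (hn : n ∈ hostKra (fun i => Gf (i + 1)) k) :
      faceRestrict true a * n * (faceRestrict true a)⁻¹ ∈ hostKra (fun i => Gf (i + 1)) k :=
    (mem_normalizer_iff.mp (hostKra_le_normalizer_hostKra_succ hanti hcomm
      (faceRestrict_mem_hostKra hanti true ha)) n).mp hn
  induction hg using closure_induction with
  | mem _ hc =>
    obtain ⟨S, x, hx, rfl⟩ := hc
    rw [faceRestrict_upperFaceConfig (fun _ => rfl)]
    by_cases h0 : 0 ∈ S
    · rw [faceRestrict_false_upperFaceConfig h0, inv_one, mul_one]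
      exact upperFaceConfig_mem_hostKra (hanti (card_tailFace_lt h0) hx)
    · rw [faceRestrict_upperFaceConfig (absurd · h0), mul_inv_cancel]
      exact one_mem _
  | one => simp [one_mem]
  | mul a b ha _ iha ihb =>
    have key : faceRestrict true (a * b) * (faceRestrict false (a * b))⁻¹ =
        faceRestrict true a * (faceRestrict true b * (faceRestrict false b)⁻¹) *
          (faceRestrict true a)⁻¹ * (faceRestrict true a * (faceRestrict false a)⁻¹) := by
      simp only [map_mul]; group
    rw [key]
    exact mul_mem (conj_mem ha ihb) iha
  | inv a ha iha =>
    have key : faceRestrict true a⁻¹ * (faceRestrict false a⁻¹)⁻¹ =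
        faceRestrict true a⁻¹ * (faceRestrict true a * (faceRestrict false a)⁻¹)⁻¹ *
          (faceRestrict true a⁻¹)⁻¹ := by
      simp only [map_inv]; group
    rw [key]
    exact conj_mem (inv_mem ha) (inv_mem iha)

theorem apply_topVert_mem_of_eq_one_of_ne_topVert (hanti : Antitone Gf)
    (hcomm : ∀ i j, ⁅Gf i, Gf j⁆ ≤ Gf (i + j)) {g : (Fin k → Bool) → G}
    (hg : g ∈ hostKra Gf k) (hsupp : ∀ ω ≠ topVert k, g ω = 1) : g (topVert k) ∈ Gf k := by
  induction k generalizing Gf with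
  | zero => exact apply_mem_of_mem_hostKra hanti hg _
  | succ k ih =>
    have hfalse : faceRestrict false g = 1 := funext fun ω =>
      hsupp _ fun h => Bool.false_ne_true (cons_eq_topVert_iff.mp h).1
    have hshift := faceRestrict_true_mul_inv_false_mem hanti hcomm hg
    rw [hfalse, inv_one, mul_one] at hshift
    rw [← cons_eq_topVert_iff.mpr ⟨rfl, rfl⟩, ← faceRestrict_apply true g]
    exact ih (Gf := fun i => Gf (i + 1)) (hanti.comp_monotone fun _ _ h => Nat.succ_le_succ h)
      (fun i j => (hcomm (i + 1) (j + 1)).trans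
        (hanti (show i + j + 1 ≤ i + 1 + (j + 1) by omega)))
      hshift fun ω hω => hsupp _ fun h => hω (cons_eq_topVert_iff.mp h).2

end HostKra

/-- For a filtered group of degree `s` and `k = s + 1`, two Host–Kra cubes
agreeing at all vertices except the top vertex agree at the top vertex too. -/
theorem hostKra_corner_uniqueness {G : Type*} [Group G] (Gf : ℕ → Subgroup G) (s : ℕ)
    (hf : IsGroupFiltration Gf) (hdeg : Gf (s + 1) = ⊥)
    (g g' : (Fin (s + 1) → Bool) → G)
    (hg : g ∈ hostKra Gf (s + 1)) (hg' : g' ∈ hostKra Gf (s + 1))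
    (h : ∀ ω, ω ≠ topVert (s + 1) → g ω = g' ω) :
    g (topVert (s + 1)) = g' (topVert (s + 1)) := by
  have hsupp : ∀ ω ≠ topVert (s + 1), (g⁻¹ * g') ω = 1 := fun ω hω => by
    simp [h ω hω]
  have htop := HostKra.apply_topVert_mem_of_eq_one_of_ne_topVert
    (antitone_nat_of_succ_le hf.mono) hf.comm (mul_mem (inv_mem hg) hg') hsupp
  rw [hdeg, mem_bot] at htop
  exact inv_mul_eq_one.mp htop
end

section
/- Let A be an abelian group with the degree-s filtration A = A_0 = A_1 = ... = A_s ⊇ A_{s+1} = {0}. A configuration c : {0,1}^{s+1} → A lies in HK^{s+1}(A_•) if and only if the alternating sum ∑_{ω ∈ {0,1}^{s+1}} (−1)^{|ω|} c(ω) equals 0, where |ω| is the number of coordinates of ω equal to 1. -/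
/-!
The alternating product `c ↦ ∏_ω c(ω)^{(-1)^{|ω|}}` is a homomorphism, and it kills every
generator `[x]_{F_S}` with `S ≠ univ`: the alternating sum of `(-1)^{|ω|}` over a face with a
free coordinate vanishes. Since `A_{s+1} = 0`, this puts `HK^{s+1}(A_•)` inside its kernel.
Conversely, every configuration is a product of face configurations (point masses are obtained
by downward induction on the cube), so every `c` is `h · [y]_{top}` with `h ∈ HK^{s+1}(A_•)`;
on `[y]_{top}` the alternating product is `y^{±1}`, so `c` in the kernel forces `y = 1`.
-/

open Subgroup

theorem Finset.prod_zpow_eq_zpow_sum {G ι : Type*} [CommGroup G] (s : Finset ι) (f : ι → ℤ)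
    (x : G) : ∏ i ∈ s, x ^ f i = x ^ ∑ i ∈ s, f i := by
  classical
  induction s using Finset.induction_on with
  | empty => simp
  | insert a s ha ih => rw [Finset.sum_insert ha, Finset.prod_insert ha, zpow_add, ih]

theorem neg_one_pow_card_filter_eq_prod {ι : Type*} [Fintype ι] (η : ι → Bool) :
    (-1 : ℤ) ^ (Finset.univ.filter fun i => η i = true).card =
      ∏ i, if η i = true then -1 else 1 := by
  rw [← Finset.prod_const, Finset.prod_filter]

/-- The alternating sum over an upper face factors as `∏ i, ∑ b, f i b`, and the factor of a
free coordinate `j ∉ S` is `1 + (-1) = 0`. -/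
theorem sum_upperFace_neg_one_pow_card {ι : Type*} [Fintype ι] [DecidableEq ι]
    {S : Finset ι} (hS : S ≠ Finset.univ) :
    ∑ η : ι → Bool, (if ∀ i ∈ S, η i = true then
      (-1 : ℤ) ^ (Finset.univ.filter fun i => η i = true).card else 0) = 0 := by
  obtain ⟨j, hj⟩ : ∃ j, j ∉ S := by
    by_contra! h
    exact hS (Finset.eq_univ_iff_forall.2 h)
  let f : ι → Bool → ℤ := fun i b => if b then -1 else if i ∈ S then 0 else 1
  have hfactor : ∀ η : ι → Bool, (if ∀ i ∈ S, η i = true then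
      (-1 : ℤ) ^ (Finset.univ.filter fun i => η i = true).card else 0) = ∏ i, f i (η i) := by
    intro η
    split_ifs with hη
    · rw [neg_one_pow_card_filter_eq_prod]
      refine Finset.prod_congr rfl fun i _ => ?_
      cases hηi : η i
      · have hi : i ∉ S := fun hi => by simp [hη i hi] at hηi
        simp [f, hi]
      · simp [f]
    · push Not at hη
      obtain ⟨i, hi, hηi⟩ := hη
      exact (Finset.prod_eq_zero (Finset.mem_univ i) (by simp [f, hi, hηi])).symm
  rw [Fintype.sum_congr _ _ hfactor, ← Fintype.prod_sum]
  exact Finset.prod_eq_zero (Finset.mem_univ j) (by simp [f, hj])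

def alternatingProd (A : Type*) [CommGroup A] (k : ℕ) : ((Fin k → Bool) → A) →* A where
  toFun c := ∏ ω : Fin k → Bool,
    c ω ^ ((-1 : ℤ) ^ (Finset.univ.filter fun i => ω i = true).card)
  map_one' := by simp
  map_mul' c d := by simp only [Pi.mul_apply, mul_zpow, Finset.prod_mul_distrib]

theorem alternatingProd_apply {A : Type*} [CommGroup A] {k : ℕ} (c : (Fin k → Bool) → A) :
    alternatingProd A k c = ∏ ω : Fin k → Bool,
      c ω ^ ((-1 : ℤ) ^ (Finset.univ.filter fun i => ω i = true).card) := rfl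

theorem alternatingProd_upperFaceConfig_of_ne_univ {A : Type*} [CommGroup A] {k : ℕ}
    {S : Finset (Fin k)} (hS : S ≠ Finset.univ) (x : A) :
    alternatingProd A k (upperFaceConfig S x) = 1 := by
  calc alternatingProd A k (upperFaceConfig S x)
      = ∏ η : Fin k → Bool, x ^ (if ∀ i ∈ S, η i = true then
          (-1 : ℤ) ^ (Finset.univ.filter fun i => η i = true).card else 0) := by
        refine Finset.prod_congr rfl fun η _ => ?_
        unfold upperFaceConfig
        split_ifs <;> simp
    _ = 1 := by
        rw [Finset.prod_zpow_eq_zpow_sum, ← zpow_zero x]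
        congr 1
        convert sum_upperFace_neg_one_pow_card hS

theorem alternatingProd_mulSingle_topVert_eq_one_iff {A : Type*} [CommGroup A] {k : ℕ}
    {x : A} : alternatingProd A k (Pi.mulSingle (topVert k) x) = 1 ↔ x = 1 := by
  rw [alternatingProd_apply, Fintype.prod_eq_single (topVert k) fun ω hω => by simp [hω]]
  rcases neg_one_pow_eq_or ℤ k with h | h <;> simp [topVert, h]

theorem upperFaceConfig_univ {G : Type*} [Group G] (k : ℕ) (x : G) :
    upperFaceConfig (Finset.univ : Finset (Fin k)) x = Pi.mulSingle (topVert k) x := by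
  funext ω
  simp [upperFaceConfig, Pi.mulSingle_apply, funext_iff, topVert]

open Classical in
theorem upperFaceConfig_eq_mulSingle_mul_prod {G : Type*} [CommGroup G] {k : ℕ}
    (ω : Fin k → Bool) (x : G) :
    upperFaceConfig (Finset.univ.filter fun i => ω i = true) x =
      Pi.mulSingle ω x * ∏ η ∈ Finset.univ.filter (ω < ·), Pi.mulSingle η x := by
  funext ζ
  have hle : (∀ i, ω i = true → ζ i = true) ↔ ω ≤ ζ := by
    simp only [Pi.le_def, Bool.le_iff_imp]
  by_cases hζ : ζ = ω
  · subst hζ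
    simp [upperFaceConfig, Finset.prod_apply]
  · simp [upperFaceConfig, Finset.prod_apply, hζ, hle, lt_iff_le_and_ne, Ne.symm hζ]

theorem mulSingle_mem_hostKra_top {G : Type*} [CommGroup G] {k : ℕ}
    (ω : Fin k → Bool) (x : G) : Pi.mulSingle ω x ∈ hostKra (fun _ => ⊤) k := by
  induction ω using WellFoundedGT.induction with
  | _ ω ih =>
    classical
    rw [eq_mul_inv_of_mul_eq (upperFaceConfig_eq_mulSingle_mul_prod ω x).symm]
    refine mul_mem (subset_closure ⟨_, x, mem_top _, rfl⟩) (inv_mem (prod_mem fun η hη => ?_))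
    exact ih η (Finset.mem_filter.1 hη).2

theorem hostKra_top_eq_top (G : Type*) [CommGroup G] (k : ℕ) :
    hostKra (fun _ => (⊤ : Subgroup G)) k = ⊤ := by
  refine eq_top_iff.2 fun c _ => ?_
  rw [← Finset.univ_prod_mulSingle c]
  exact prod_mem fun ω _ => mulSingle_mem_hostKra_top ω (c ω)

abbrev degreeFiltration (A : Type*) [Group A] (s : ℕ) : ℕ → Subgroup A :=
  fun i => if i ≤ s then ⊤ else ⊥

theorem hostKra_degreeFiltration_le_ker (A : Type*) [CommGroup A] (s : ℕ) :
    hostKra (degreeFiltration A s) (s + 1) ≤ (alternatingProd A (s + 1)).ker := by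
  rw [hostKra, closure_le]
  rintro _ ⟨S, x, hx, rfl⟩
  by_cases hS : S = Finset.univ
  · subst hS
    obtain rfl : x = 1 := by simpa [degreeFiltration] using hx
    simp [upperFaceConfig_univ]
  · exact alternatingProd_upperFaceConfig_of_ne_univ hS x

theorem hostKra_top_le_sup (A : Type*) [CommGroup A] (s : ℕ) :
    hostKra (fun _ => ⊤) (s + 1) ≤
      hostKra (degreeFiltration A s) (s + 1) ⊔
        (MonoidHom.mulSingle _ (topVert (s + 1))).range := by
  rw [hostKra, closure_le]
  rintro _ ⟨S, x, -, rfl⟩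
  by_cases hS : S = Finset.univ
  · subst hS
    rw [upperFaceConfig_univ]
    exact mem_sup_right ⟨x, rfl⟩
  · have hcard : S.card ≤ s := by
      simpa [Nat.lt_succ_iff] using (Finset.card_lt_iff_ne_univ S).2 hS
    exact mem_sup_left (subset_closure ⟨S, x, by simp [degreeFiltration, hcard], rfl⟩)

theorem hostKra_degree_filtration_iff_alternating_general {A : Type*} [CommGroup A] (s : ℕ)
    (c : (Fin (s + 1) → Bool) → A) :
    c ∈ hostKra (fun i => if i ≤ s then (⊤ : Subgroup A) else ⊥) (s + 1) ↔
      ∏ ω : Fin (s + 1) → Bool,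
        c ω ^ ((-1 : ℤ) ^ (Finset.univ.filter fun i => ω i = true).card) = 1 := by
  refine ⟨fun hc => hostKra_degreeFiltration_le_ker A s hc, fun hc => ?_⟩
  have hc_top : c ∈ hostKra (fun _ => ⊤) (s + 1) := hostKra_top_eq_top A (s + 1) ▸ mem_top c
  obtain ⟨h, hh, _, ⟨y, rfl⟩, rfl⟩ := mem_sup.1 (hostKra_top_le_sup A s hc_top)
  rw [← alternatingProd_apply, map_mul, hostKra_degreeFiltration_le_ker A s hh, one_mul,
    MonoidHom.mulSingle_apply, alternatingProd_mulSingle_topVert_eq_one_iff] at hc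
  simpa [hc] using hh

/-- For an abelian group `A` with the degree-`s` filtration
`A = A_0 = ⋯ = A_s ⊇ A_{s+1} = {1}`, a configuration `c : {0,1}^{s+1} → A` lies in
`HK^{s+1}(A_•)` iff its alternating product `∏_ω c(ω)^{(-1)^{|ω|}}` is trivial. -/
theorem hostKra_degree_filtration_iff_alternating {A : Type*} [CommGroup A] (s : ℕ)
    (hs : 1 ≤ s) (c : (Fin (s + 1) → Bool) → A) :
    c ∈ hostKra (fun i => if i ≤ s then (⊤ : Subgroup A) else ⊥) (s + 1) ↔
      ∏ ω : Fin (s + 1) → Bool,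
        c ω ^ ((-1 : ℤ) ^ (Finset.univ.filter fun i => ω i = true).card) = 1 :=
  hostKra_degree_filtration_iff_alternating_general s c
end

section
/- Let X be a cubespace that has (s+1)-uniqueness and k-completion for all k (a nilspace of degree s), and let k ≥ s+1. Then a configuration c : {0,1}^k → X lies in C^k(X) if and only if every face of c of dimension s+1 lies in C^{s+1}(X). -/
/-- A morphism of discrete cubes `{0,1}^k → {0,1}^ℓ`: each coordinate function is
identically `0`, identically `1`, equal to `ω_j`, or equal to `1 - ω_j`. -/
def IsCubeMorphism {k l : ℕ} (ρ : (Fin k → Bool) → (Fin l → Bool)) : Prop :=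
  ∀ i : Fin l, (∀ ω, ρ ω i = false) ∨ (∀ ω, ρ ω i = true) ∨
    (∃ j, ∀ ω, ρ ω i = ω j) ∨ (∃ j, ∀ ω, ρ ω i = !(ω j))

/-- A cubespace: a set `X` with cube sets `C^k(X) ⊆ X^{{0,1}^k}`, with `C^0(X) = X`,
closed under precomposition with morphisms of discrete cubes. -/
structure Cubespace (X : Type*) where
  C : ∀ k : ℕ, Set ((Fin k → Bool) → X)
  C_zero : C 0 = Set.univ
  C_morph : ∀ {k l : ℕ} (ρ : (Fin k → Bool) → (Fin l → Bool)),
    IsCubeMorphism ρ → ∀ c ∈ C l, (c ∘ ρ) ∈ C k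

/-- An `(n+1)`-corner: a configuration whose restriction to every lower
codimension-1 face is an `n`-cube (the value at the top vertex is irrelevant). -/
def IsCubeCorner {X : Type*} (CS : Cubespace X) (n : ℕ) (lam : (Fin (n + 1) → Bool) → X) : Prop :=
  ∀ i : Fin (n + 1), (fun ω : Fin n → Bool => lam (i.insertNth false ω)) ∈ CS.C n

/-- `(n+1)`-completion: every `(n+1)`-corner can be completed to an `(n+1)`-cube. -/
def HasCompletion {X : Type*} (CS : Cubespace X) (n : ℕ) : Prop :=
  ∀ lam : (Fin (n + 1) → Bool) → X, IsCubeCorner CS n lam →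
    ∃ x : X, (fun ω => if ω = topVert (n + 1) then x else lam ω) ∈ CS.C (n + 1)

/-- `k`-uniqueness: two `k`-cubes agreeing at all vertices except the top vertex are equal. -/
def HasUniqueness {X : Type*} (CS : Cubespace X) (k : ℕ) : Prop :=
  ∀ c ∈ CS.C k, ∀ c' ∈ CS.C k, (∀ ω, ω ≠ topVert k → c ω = c' ω) → c = c'

/-- The glueing property: two `(n+1)`-cubes agreeing along a common codimension-1 face
can be glued to form another `(n+1)`-cube. -/
def HasGlueing {X : Type*} (CS : Cubespace X) : Prop :=
  ∀ (n : ℕ) (c c' : (Fin (n + 1) → Bool) → X), c ∈ CS.C (n + 1) → c' ∈ CS.C (n + 1) →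
    (∀ ω : Fin n → Bool, c (Fin.snoc ω true) = c' (Fin.snoc ω false)) →
    (fun ω : Fin (n + 1) → Bool => if ω (Fin.last n) = true then c' ω else c ω) ∈ CS.C (n + 1)

/-- A cubespace morphism: maps `k`-cubes to `k`-cubes for every `k`. -/
def IsMorphism {X Y : Type*} (CX : Cubespace X) (CY : Cubespace Y) (f : X → Y) : Prop :=
  ∀ k : ℕ, ∀ c ∈ CX.C k, (fun ω => f (c ω)) ∈ CY.C k

/-- A fibration: a cubespace morphism such that every corner of `X` lying over
(all but the top vertex of) a cube of `Y` can be completed to a cube of `X`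
mapping onto that cube.  (The `k = 0` case of corner completion is surjectivity.) -/
def IsFibration {X Y : Type*} (CX : Cubespace X) (CY : Cubespace Y) (f : X → Y) : Prop :=
  IsMorphism CX CY f ∧ Function.Surjective f ∧
  ∀ (n : ℕ) (lam : (Fin (n + 1) → Bool) → X) (c : (Fin (n + 1) → Bool) → Y),
    IsCubeCorner CX n lam → c ∈ CY.C (n + 1) →
    (∀ ω, ω ≠ topVert (n + 1) → f (lam ω) = c ω) →
    ∃ x : X, f x = c (topVert (n + 1)) ∧
      (fun ω => if ω = topVert (n + 1) then x else lam ω) ∈ CX.C (n + 1)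

/-- A face embedding `{0,1}^m → {0,1}^k`: an embedding of a subcube of `{0,1}^k` obtained by
fixing the coordinates off the range of `ι` to the values `ε`. -/
def IsFaceEmbedding {m k : ℕ} (φ : (Fin m → Bool) → (Fin k → Bool)) : Prop :=
  ∃ (ι : Fin m ↪ Fin k) (ε : Fin k → Bool), ∀ α : Fin m → Bool,
    (∀ t, φ α (ι t) = α t) ∧ ∀ j, j ∉ Set.range ι → φ α j = ε j

/-!
Induct on `k`. The codimension-1 faces through the origin of a configuration all of whose
`(s+1)`-faces are cubes are cubes by induction, so it is a corner; complete it to a cube.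
The top `(s+1)`-faces of the two configurations are cubes that differ at most at the top
vertex, so `(s+1)`-uniqueness shows that the completion does not change the configuration.
-/

theorem IsFaceEmbedding.isCubeMorphism {m k : ℕ} {φ : (Fin m → Bool) → (Fin k → Bool)}
    (h : IsFaceEmbedding φ) : IsCubeMorphism φ := by
  obtain ⟨ι, ε, hφ⟩ := h
  intro i
  by_cases hi : i ∈ Set.range ι
  · obtain ⟨t, rfl⟩ := hi
    exact Or.inr (Or.inr (Or.inl ⟨t, fun ω => (hφ ω).1 t⟩))
  · cases hε : ε i with
    | false => exact Or.inl fun ω => by rw [(hφ ω).2 i hi, hε]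
    | true => exact Or.inr (Or.inl fun ω => by rw [(hφ ω).2 i hi, hε])

theorem isFaceEmbedding_id (k : ℕ) : IsFaceEmbedding (id : (Fin k → Bool) → (Fin k → Bool)) :=
  ⟨Function.Embedding.refl _, fun _ => true, fun _ =>
    ⟨fun _ => rfl, fun j hj => absurd ⟨j, rfl⟩ hj⟩⟩

theorem IsFaceEmbedding.insertNth {m k : ℕ} {φ : (Fin m → Bool) → (Fin k → Bool)}
    (h : IsFaceEmbedding φ) (i : Fin (k + 1)) (b : Bool) :
    IsFaceEmbedding (fun α => i.insertNth b (φ α)) := by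
  obtain ⟨ι, ε, hφ⟩ := h
  refine ⟨ι.trans (Fin.succAboveEmb i), i.insertNth b ε, fun α => ⟨fun t => ?_, fun j hj => ?_⟩⟩
  · simp only [Function.Embedding.trans_apply, Fin.succAboveEmb_apply,
      Fin.insertNth_apply_succAbove, (hφ α).1 t]
  · rcases eq_or_ne j i with rfl | hne
    · simp only [Fin.insertNth_apply_same]
    · obtain ⟨t, rfl⟩ := Fin.exists_succAbove_eq hne
      simp only [Fin.insertNth_apply_succAbove]
      refine (hφ α).2 t ?_
      rintro ⟨u, rfl⟩
      exact hj ⟨u, rfl⟩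

def topFaceMap (s k : ℕ) : (Fin s → Bool) → (Fin k → Bool) :=
  fun α j => if hj : (j : ℕ) < s then α ⟨j, hj⟩ else true

theorem topFaceMap_castLE {s k : ℕ} (h : s ≤ k) (α : Fin s → Bool) (t : Fin s) :
    topFaceMap s k α (Fin.castLE h t) = α t := by
  simp [topFaceMap, t.isLt]

theorem isFaceEmbedding_topFaceMap {s k : ℕ} (h : s ≤ k) :
    IsFaceEmbedding (topFaceMap s k) := by
  refine ⟨Fin.castLEEmb h, fun _ => true, fun α => ⟨topFaceMap_castLE h α, fun j hj => ?_⟩⟩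
  have : ¬ (j : ℕ) < s := fun hlt => hj ⟨⟨j, hlt⟩, by ext; simp⟩
  simp [topFaceMap, this]

theorem topFaceMap_eq_topVert_iff {s k : ℕ} (h : s ≤ k) (α : Fin s → Bool) :
    topFaceMap s k α = topVert k ↔ α = topVert s := by
  constructor
  · intro hα
    funext t
    rw [← topFaceMap_castLE h α t, hα]
    rfl
  · rintro rfl
    funext j
    simp [topFaceMap, topVert]

theorem HasUniqueness.eq_of_comp_topFaceMap_mem {X : Type*} {CS : Cubespace X} {s m : ℕ}
    (huniq : HasUniqueness CS (s + 1)) (hm : s + 1 ≤ m) {c c' : (Fin m → Bool) → X}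
    (hc : c ∘ topFaceMap (s + 1) m ∈ CS.C (s + 1)) (hc' : c' ∈ CS.C m)
    (hagree : ∀ ω, ω ≠ topVert m → c ω = c' ω) : c = c' := by
  have hface' : c' ∘ topFaceMap (s + 1) m ∈ CS.C (s + 1) :=
    CS.C_morph _ (isFaceEmbedding_topFaceMap hm).isCubeMorphism c' hc'
  have htop : c (topVert m) = c' (topVert m) := by
    have h := congrFun (huniq _ hc _ hface' fun α hα =>
      hagree _ ((topFaceMap_eq_topVert_iff hm α).not.mpr hα)) (topVert (s + 1))
    simpa only [Function.comp_apply, (topFaceMap_eq_topVert_iff hm _).mpr rfl] using h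
  funext ω
  by_cases hω : ω = topVert m
  · rw [hω, htop]
  · exact hagree ω hω

theorem Cubespace.mem_C_succ_of_isCubeCorner {X : Type*} {CS : Cubespace X} {s m : ℕ}
    (huniq : HasUniqueness CS (s + 1)) (hcomp : HasCompletion CS m) (hm : s + 1 ≤ m + 1)
    {c : (Fin (m + 1) → Bool) → X} (hcorner : IsCubeCorner CS m c)
    (hface : c ∘ topFaceMap (s + 1) (m + 1) ∈ CS.C (s + 1)) : c ∈ CS.C (m + 1) := by
  obtain ⟨x, hx⟩ := hcomp c hcorner
  rwa [← huniq.eq_of_comp_topFaceMap_mem hm hface hx fun ω hω => (if_neg hω).symm] at hx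

/-- In a nilspace of degree `s` (a cubespace with `(s+1)`-uniqueness and
`k`-completion for all `k`), for `k ≥ s + 1`, a configuration on `{0,1}^k` is a cube if and
only if all its faces of dimension `s+1` are cubes. -/
theorem high_cubes_boring {X : Type*} (CS : Cubespace X) (s : ℕ)
    (huniq : HasUniqueness CS (s + 1)) (hcomp : ∀ n, HasCompletion CS n)
    (k : ℕ) (hk : s + 1 ≤ k) (c : (Fin k → Bool) → X) :
    c ∈ CS.C k ↔ ∀ φ : (Fin (s + 1) → Bool) → (Fin k → Bool),
      IsFaceEmbedding φ → (c ∘ φ) ∈ CS.C (s + 1) := by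
  refine ⟨fun hc φ hφ => CS.C_morph φ hφ.isCubeMorphism c hc, ?_⟩
  induction k, hk using Nat.le_induction with
  | base => exact fun hface => hface id (isFaceEmbedding_id _)
  | succ m hm ih =>
    intro hface
    have hcorner : IsCubeCorner CS m c := fun i =>
      ih _ fun ψ hψ => hface _ (hψ.insertNth i false)
    exact Cubespace.mem_C_succ_of_isCubeCorner huniq (hcomp m) (hm.trans m.le_succ) hcorner
      (hface _ (isFaceEmbedding_topFaceMap (hm.trans m.le_succ)))
end

section
/- Let X be a cubespace with k-completion for all k. Then X satisfies the glueing property: if c, c' ∈ C^k(X) with c(ω,1) = c'(ω,0) for all ω ∈ {0,1}^{k−1}, then the configuration c'' defined by c''(ω) = c(ω) if ω_k = 0 and c''(ω) = c'(ω) if ω_k = 1 lies in C^k(X). -/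
namespace FibrantGlue

variable {X : Type*}

/-! ### basics on cube morphisms -/

lemma morph_comp {k l N : ℕ} {ρ₁ : (Fin k → Bool) → (Fin l → Bool)}
    {ρ₂ : (Fin l → Bool) → (Fin N → Bool)}
    (h₁ : IsCubeMorphism ρ₁) (h₂ : IsCubeMorphism ρ₂) :
    IsCubeMorphism (fun σ => ρ₂ (ρ₁ σ)) := by
  intro i
  rcases h₂ i with h | h | ⟨j, h⟩ | ⟨j, h⟩
  · exact Or.inl fun ω => h _
  · exact Or.inr (Or.inl fun ω => h _)
  · rcases h₁ j with g | g | ⟨j', g⟩ | ⟨j', g⟩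
    · exact Or.inl fun ω => (h _).trans (g ω)
    · exact Or.inr (Or.inl fun ω => (h _).trans (g ω))
    · exact Or.inr (Or.inr (Or.inl ⟨j', fun ω => (h _).trans (g ω)⟩))
    · exact Or.inr (Or.inr (Or.inr ⟨j', fun ω => (h _).trans (g ω)⟩))
  · rcases h₁ j with g | g | ⟨j', g⟩ | ⟨j', g⟩
    · exact Or.inr (Or.inl fun ω => (h _).trans (by rw [g ω]; rfl))
    · exact Or.inl fun ω => (h _).trans (by rw [g ω]; rfl)
    · exact Or.inr (Or.inr (Or.inr ⟨j', fun ω => (h _).trans (by rw [g ω])⟩))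
    · exact Or.inr (Or.inr (Or.inl ⟨j', fun ω => (h _).trans (by rw [g ω, Bool.not_not])⟩))

lemma morph_insertNth {m : ℕ} (i : Fin (m + 1)) :
    IsCubeMorphism (fun ω : Fin m → Bool => i.insertNth false ω) := by
  intro j
  by_cases hj : j = i
  · subst hj
    exact Or.inl fun ω => by simp
  · obtain ⟨j', rfl⟩ := Fin.exists_succAbove_eq hj
    exact Or.inr (Or.inr (Or.inl ⟨j', fun ω => by simp⟩))

lemma morph_id {N : ℕ} : IsCubeMorphism (fun σ : Fin N → Bool => σ) :=
  fun i => Or.inr (Or.inr (Or.inl ⟨i, fun _ => rfl⟩))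

lemma const_cube (CS : Cubespace X) (x : X) (k : ℕ) : (fun _ : Fin k → Bool => x) ∈ CS.C k := by
  have h0 : (fun _ : Fin 0 → Bool => x) ∈ CS.C 0 := by rw [CS.C_zero]; trivial
  have := CS.C_morph (k := k) (l := 0) (fun _ => fun i => i.elim0) (fun i => i.elim0) _ h0
  exact this

/-! ### masks, supports, face embeddings -/

def leM {N : ℕ} (a b : Fin N → Bool) : Prop := ∀ j, a j = true → b j = true

lemma leM_refl {N : ℕ} (a : Fin N → Bool) : leM a a := fun _ h => h

def suppF {N : ℕ} (u : Fin N → Bool) : Finset (Fin N) :=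
  Finset.univ.filter (fun j => u j = true)

lemma mem_suppF {N : ℕ} {u : Fin N → Bool} {j : Fin N} : j ∈ suppF u ↔ u j = true := by
  simp [suppF]

def wt {N : ℕ} (u : Fin N → Bool) : ℕ := (suppF u).card

noncomputable def enum {N : ℕ} (u : Fin N → Bool) : Fin (wt u) ≃o {x // x ∈ suppF u} :=
  (suppF u).orderIsoOfFin rfl

noncomputable def faceEmb {N : ℕ} (u : Fin N → Bool) (ω : Fin (wt u) → Bool) :
    Fin N → Bool :=
  fun j => if h : j ∈ suppF u then ω ((enum u).symm ⟨j, h⟩) else false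

noncomputable def faceProj {N : ℕ} (u : Fin N → Bool) (ω : Fin N → Bool) :
    Fin (wt u) → Bool :=
  fun i => ω ((enum u i : {x // x ∈ suppF u}) : Fin N)

lemma morph_faceEmb {N : ℕ} (u : Fin N → Bool) : IsCubeMorphism (faceEmb u) := by
  intro j
  by_cases h : j ∈ suppF u
  · exact Or.inr (Or.inr (Or.inl ⟨(enum u).symm ⟨j, h⟩, fun ω => dif_pos h⟩))
  · exact Or.inl fun ω => dif_neg h

lemma morph_faceProj {N : ℕ} (u : Fin N → Bool) : IsCubeMorphism (faceProj u) :=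
  fun i => Or.inr (Or.inr (Or.inl ⟨((enum u i : {x // x ∈ suppF u}) : Fin N), fun _ => rfl⟩))

lemma faceEmb_le {N : ℕ} (u : Fin N → Bool) (σ : Fin (wt u) → Bool) : leM (faceEmb u σ) u := by
  intro j h
  by_cases hj : j ∈ suppF u
  · exact mem_suppF.mp hj
  · rw [faceEmb, dif_neg hj] at h; exact absurd h (by simp)

lemma faceEmb_top {N : ℕ} (u : Fin N → Bool) : faceEmb u (topVert (wt u)) = u := by
  funext j
  by_cases h : j ∈ suppF u
  · rw [faceEmb, dif_pos h]; exact (mem_suppF.mp h).symm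
  · rw [faceEmb, dif_neg h]
    cases hu : u j
    · rfl
    · exact absurd (mem_suppF.mpr hu) h

lemma faceEmb_eq_top {N : ℕ} (u : Fin N → Bool) (σ : Fin (wt u) → Bool)
    (h : faceEmb u σ = u) : σ = topVert (wt u) := by
  funext i
  have hmem : ((enum u i : {x // x ∈ suppF u}) : Fin N) ∈ suppF u := (enum u i).2
  have h1 : faceEmb u σ ((enum u i : {x // x ∈ suppF u}) : Fin N) = u _ := congrFun h _
  rw [faceEmb, dif_pos hmem] at h1
  have h2 : (⟨((enum u i : {x // x ∈ suppF u}) : Fin N), hmem⟩ : {x // x ∈ suppF u}) = enum u i :=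
    Subtype.ext rfl
  rw [h2, OrderIso.symm_apply_apply] at h1
  rw [h1, mem_suppF.mp hmem]; rfl

lemma faceEmb_faceProj {N : ℕ} (u : Fin N → Bool) (ω : Fin N → Bool) (h : leM ω u) :
    faceEmb u (faceProj u ω) = ω := by
  funext j
  by_cases hj : j ∈ suppF u
  · rw [faceEmb, dif_pos hj, faceProj]
    congr 1
    exact congrArg _ (OrderIso.apply_symm_apply (enum u) ⟨j, hj⟩)
  · rw [faceEmb, dif_neg hj]
    cases hb : ω j
    · rfl
    · exact absurd (mem_suppF.mpr (h j hb)) hj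

lemma wt_lt {N : ℕ} {a u : Fin N → Bool} (hle : leM a u) (hne : a ≠ u) : wt a < wt u := by
  apply Finset.card_lt_card
  constructor
  · intro j hj; exact mem_suppF.mpr (hle j (mem_suppF.mp hj))
  · intro hsub
    apply hne
    funext j
    cases ha : a j
    · cases hu : u j
      · rfl
      · have := mem_suppF.mp (hsub (mem_suppF.mpr hu))
        rw [ha] at this; exact this
    · exact (hle j ha).symm

/-! ### the extension lemma -/

def GoodOn (CS : Cubespace X) {N : ℕ} (ψ : (Fin N → Bool) → X)
    (U : Finset (Fin N → Bool)) : Prop :=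
  ∀ w : Fin N → Bool, (∀ ω, leM ω w → ω ∉ U) →
    ∀ (k : ℕ) (ρ : (Fin k → Bool) → (Fin N → Bool)), IsCubeMorphism ρ →
      (∀ σ, leM (ρ σ) w) → (fun σ => ψ (ρ σ)) ∈ CS.C k

lemma ext_lemma (CS : Cubespace X) (hcomp : ∀ n, HasCompletion CS n) {N : ℕ} (m : ℕ) :
    ∀ (U : Finset (Fin N → Bool)) (ψ : (Fin N → Bool) → X),
      U.card = m → (∀ a ∈ U, ∀ b, leM a b → b ∈ U) → GoodOn CS ψ U →
      ∃ ψ' ∈ CS.C N, ∀ ω, ω ∉ U → ψ' ω = ψ ω := by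
  induction m using Nat.strong_induction_on with
  | _ m IH =>
  intro U ψ hcard hup hgood
  rcases U.eq_empty_or_nonempty with hU | hne
  · subst hU
    refine ⟨ψ, ?_, fun ω _ => rfl⟩
    have := hgood (fun _ => true) (fun ω _ => Finset.notMem_empty ω) N (fun σ => σ)
      morph_id (fun σ j _ => rfl)
    exact this
  · obtain ⟨u, huU, humin⟩ := Finset.exists_min_image U wt hne
    have huniq : ∀ ω ∈ U, leM ω u → ω = u := by
      intro ω hω hle
      by_contra hne'
      exact absurd (humin ω hω) (Nat.not_le.mpr (wt_lt hle hne'))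
    -- get a cube on the face {≤ u} agreeing with ψ off the top
    obtain ⟨chat, hchatC, hchat⟩ :
        ∃ chat ∈ CS.C (wt u), ∀ σ, σ ≠ topVert (wt u) → chat σ = ψ (faceEmb u σ) := by
      by_cases hwt : wt u = 0
      · refine ⟨fun _ => ψ u, ?_, ?_⟩
        · have h0 : (fun _ : Fin 0 → Bool => ψ u) ∈ CS.C 0 := by rw [CS.C_zero]; trivial
          have := CS.C_morph (k := wt u) (l := 0) (fun _ => fun i => i.elim0)
            (fun i => i.elim0) _ h0
          exact this
        · intro σ hσ
          exfalso; apply hσ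
          funext i
          exact (Fin.cast hwt i).elim0
      · obtain ⟨m', hm⟩ := Nat.exists_eq_succ_of_ne_zero hwt
        -- transport along `hm : wt u = m' + 1` using reindexing morphisms
        have hcast1 : IsCubeMorphism
            (fun (σ : Fin (m' + 1) → Bool) => (fun i : Fin (wt u) => σ (Fin.cast hm i))) :=
          fun i => Or.inr (Or.inr (Or.inl ⟨Fin.cast hm i, fun _ => rfl⟩))
        have hcast2 : IsCubeMorphism
            (fun (σ : Fin (wt u) → Bool) => (fun i : Fin (m' + 1) => σ (Fin.cast hm.symm i))) :=
          fun i => Or.inr (Or.inr (Or.inl ⟨Fin.cast hm.symm i, fun _ => rfl⟩))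
        set femb' : (Fin (m' + 1) → Bool) → (Fin N → Bool) :=
          fun σ => faceEmb u (fun i => σ (Fin.cast hm i)) with hfemb'
        have hfembm : IsCubeMorphism femb' := morph_comp hcast1 (morph_faceEmb u)
        set lam' : (Fin (m' + 1) → Bool) → X := fun σ => ψ (femb' σ) with hlam'
        have hcorner : IsCubeCorner CS m' lam' := by
          intro i
          set J : Fin N := ((enum u (Fin.cast hm.symm i) : {x // x ∈ suppF u}) : Fin N) with hJ
          have hJmem : J ∈ suppF u := (enum u (Fin.cast hm.symm i)).2
          set w' : Fin N → Bool := fun j => if j = J then false else u j with hw'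
          have hw'le : leM w' u := by
            intro j hj
            simp only [hw'] at hj
            by_cases h : j = J
            · rw [if_pos h] at hj; exact absurd hj (by simp)
            · rwa [if_neg h] at hj
          refine hgood w' ?_ m' (fun ω => femb' (i.insertNth false ω))
            (morph_comp (morph_insertNth i) hfembm) ?_
          · intro ω hω hωU
            have hωu : leM ω u := fun j hj => hw'le j (hω j hj)
            have hωJ : ω J = false := by
              cases h : ω J
              · rfl
              · have := hω J h
                simp [hw'] at this
            have : ω ≠ u := by
              intro h
              rw [h] at hωJ
              rw [mem_suppF.mp hJmem] at hωJ
              exact absurd hωJ (by simp)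
            exact this (huniq ω hωU hωu)
          · intro σ j hj
            by_cases h : j ∈ suppF u
            · simp only [hfemb', faceEmb] at hj
              rw [dif_pos h] at hj
              by_cases hjJ : j = J
              · exfalso
                have hsub : (⟨j, h⟩ : {x // x ∈ suppF u}) = enum u (Fin.cast hm.symm i) := by
                  apply Subtype.ext; exact hjJ.trans hJ
                have : (enum u).symm ⟨j, h⟩ = Fin.cast hm.symm i := by
                  rw [hsub, OrderIso.symm_apply_apply]
                rw [this] at hj
                have : (Fin.cast hm (Fin.cast hm.symm i)) = i := rfl
                rw [this] at hj
                rw [Fin.insertNth_apply_same] at hj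
                exact absurd hj (by simp)
              · show w' j = true
                simp only [hw']
                rw [if_neg hjJ]
                exact mem_suppF.mp h
            · simp only [hfemb', faceEmb] at hj
              rw [dif_neg h] at hj
              exact absurd hj (by simp)
        obtain ⟨x, hx⟩ := hcomp m' lam' hcorner
        refine ⟨fun σ => (fun ω => if ω = topVert (m' + 1) then x else lam' ω)
          (fun i => σ (Fin.cast hm.symm i)), ?_, ?_⟩
        · exact CS.C_morph _ hcast2 _ hx
        · intro σ hσ
          have hinner : (fun i => σ (Fin.cast hm.symm i)) ≠ topVert (m' + 1) := by
            intro h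
            apply hσ
            funext j
            have : σ (Fin.cast hm.symm (Fin.cast hm j)) = true := congrFun h (Fin.cast hm j)
            exact this
          simp only [if_neg hinner, hlam', hfemb']
          rfl
    -- update ψ at u with the completed value
    classical
    set x := chat (topVert (wt u)) with hxdef
    set ψ' := Function.update ψ u x with hψ'
    have halpha : ∀ σ, ψ' (faceEmb u σ) = chat σ := by
      intro σ
      by_cases hσ : σ = topVert (wt u)
      · subst hσ
        rw [faceEmb_top, hψ', Function.update_self]
      · have : faceEmb u σ ≠ u := fun h => hσ (faceEmb_eq_top u σ h)
        rw [hψ', Function.update_of_ne this, hchat σ hσ]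
    have hgood' : GoodOn CS ψ' (U.erase u) := by
      intro w hw k ρ hρ hrange
      by_cases hcase : leM u w
      · have hwu : w = u := by
          by_cases h : w = u
          · exact h
          · exfalso
            exact hw w (leM_refl w) (Finset.mem_erase.mpr ⟨h, hup u huU w hcase⟩)
        subst hwu
        have heq : (fun σ => ψ' (ρ σ)) = fun σ => chat (faceProj w (ρ σ)) := by
          funext σ
          conv_lhs => rw [show ρ σ = faceEmb w (faceProj w (ρ σ)) from
            (faceEmb_faceProj w (ρ σ) (hrange σ)).symm]
          exact halpha _
        rw [heq]
        exact CS.C_morph _ (morph_comp hρ (morph_faceProj w)) _ hchatC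
      · have hne' : ∀ σ, ρ σ ≠ u := fun σ h => hcase (h ▸ hrange σ)
        have heq : (fun σ => ψ' (ρ σ)) = fun σ => ψ (ρ σ) := by
          funext σ
          rw [hψ', Function.update_of_ne (hne' σ)]
        rw [heq]
        refine hgood w ?_ k ρ hρ hrange
        intro ω hωw hωU
        by_cases hωu : ω = u
        · exact hcase (hωu ▸ hωw)
        · exact hw ω hωw (Finset.mem_erase.mpr ⟨hωu, hωU⟩)
    obtain ⟨ψhat, hψhatC, hagree⟩ := IH (U.erase u).card
      (by rw [← hcard]; exact Finset.card_erase_lt_of_mem huU) (U.erase u) ψ' rfl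
      (by
        intro a ha b hab
        have haU : a ∈ U := Finset.mem_of_mem_erase ha
        have hbU : b ∈ U := hup a haU b hab
        refine Finset.mem_erase.mpr ⟨?_, hbU⟩
        intro hbu
        exact (Finset.mem_erase.mp ha).1 (huniq a haU (by rw [hbu] at hab; exact hab)))
      hgood'
    refine ⟨ψhat, hψhatC, ?_⟩
    intro ω hω
    have h1 : ω ∉ U.erase u := fun h => hω (Finset.mem_of_mem_erase h)
    rw [hagree ω h1, hψ', Function.update_of_ne (fun h => hω (by rw [h]; exact huU))]

/-! ### main theorem -/

theorem fibrant_implies_glueing' (CS : Cubespace X)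
    (hcomp : ∀ n, HasCompletion CS n) :
    ∀ (n : ℕ) (c c' : (Fin (n + 1) → Bool) → X), c ∈ CS.C (n + 1) → c' ∈ CS.C (n + 1) →
    (∀ ω : Fin n → Bool, c (Fin.snoc ω true) = c' (Fin.snoc ω false)) →
    (fun ω : Fin (n + 1) → Bool => if ω (Fin.last n) = true then c' ω else c ω) ∈ CS.C (n + 1) := by
  intro n c c' hc hc' hmatch
  classical
  set aIdx : Fin (n + 2) := Fin.castSucc (Fin.last n) with haIdx
  set bIdx : Fin (n + 2) := Fin.last (n + 1) with hbIdx
  set vv : (Fin (n + 2) → Bool) → (Fin n → Bool) := fun ω j => ω j.castSucc.castSucc with hvv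
  set ψ : (Fin (n + 2) → Bool) → X := fun ω =>
    if ω bIdx = true then
      (if ω aIdx = true then c (Fin.snoc (vv ω) true) else c' (Fin.snoc (vv ω) true))
    else
      (if ω aIdx = true then c (Fin.snoc (vv ω) false) else c (Fin.snoc (vv ω) true)) with hψ
  set U : Finset (Fin (n + 2) → Bool) :=
    Finset.univ.filter (fun ω => ω aIdx = true ∧ ω bIdx = true) with hU
  have hupset : ∀ a ∈ U, ∀ b, leM a b → b ∈ U := by
    intro a ha b hab
    rw [hU, Finset.mem_filter] at ha ⊢
    exact ⟨Finset.mem_univ _, hab _ ha.2.1, hab _ ha.2.2⟩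
  set projA : (Fin (n + 2) → Bool) → (Fin (n + 1) → Bool) :=
    fun ω => Fin.snoc (vv ω) (!(ω aIdx)) with hprojA
  set projB : (Fin (n + 2) → Bool) → (Fin (n + 1) → Bool) :=
    fun ω => Fin.snoc (vv ω) (ω bIdx) with hprojB
  have hmA : IsCubeMorphism projA := by
    intro i
    refine Fin.lastCases ?_ (fun j => ?_) i
    · exact Or.inr (Or.inr (Or.inr ⟨aIdx, fun ω => by simp [hprojA]⟩))
    · exact Or.inr (Or.inr (Or.inl ⟨j.castSucc.castSucc, fun ω => by simp [hprojA, hvv]⟩))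
  have hmB : IsCubeMorphism projB := by
    intro i
    refine Fin.lastCases ?_ (fun j => ?_) i
    · exact Or.inr (Or.inr (Or.inl ⟨bIdx, fun ω => by simp [hprojB]⟩))
    · exact Or.inr (Or.inr (Or.inl ⟨j.castSucc.castSucc, fun ω => by simp [hprojB, hvv]⟩))
  have hgood : GoodOn CS ψ U := by
    intro w hw k ρ hρ hrange
    have hwU : w ∉ U := hw w (leM_refl w)
    rw [hU, Finset.mem_filter] at hwU
    by_cases hwb : w bIdx = true
    · have hwa : w aIdx = false := by
        cases h : w aIdx
        · rfl
        · exact absurd ⟨Finset.mem_univ _, h, hwb⟩ hwU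
      have hρa : ∀ σ, ρ σ aIdx = false := by
        intro σ
        cases h : ρ σ aIdx
        · rfl
        · have := hrange σ aIdx h
          rw [hwa] at this
          exact absurd this (by simp)
      have heq : (fun σ => ψ (ρ σ)) = fun σ => c' (projB (ρ σ)) := by
        funext σ
        simp only [hψ, hprojB, hρa σ]
        cases hb : ρ σ bIdx
        · simp only [hb, Bool.false_eq_true, if_false, if_neg]
          exact hmatch (vv (ρ σ))
        · simp [hb]
      rw [heq]
      exact CS.C_morph _ (morph_comp hρ hmB) c' hc'
    · have hρb : ∀ σ, ρ σ bIdx = false := by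
        intro σ
        cases h : ρ σ bIdx
        · rfl
        · have := hrange σ bIdx h
          exact absurd this hwb
      have heq : (fun σ => ψ (ρ σ)) = fun σ => c (projA (ρ σ)) := by
        funext σ
        simp only [hψ, hprojA, hρb σ]
        cases ha : ρ σ aIdx <;> simp [ha]
      rw [heq]
      exact CS.C_morph _ (morph_comp hρ hmA) c hc
  obtain ⟨ψhat, hψhatC, hagr⟩ := ext_lemma CS hcomp U.card U ψ rfl hupset hgood
  set φ : (Fin (n + 1) → Bool) → (Fin (n + 2) → Bool) :=
    fun ω => Fin.snoc (Fin.snoc (fun j : Fin n => ω j.castSucc) (!(ω (Fin.last n))))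
      (ω (Fin.last n)) with hφ
  have hφm : IsCubeMorphism φ := by
    intro i
    refine Fin.lastCases ?_ (fun i' => ?_) i
    · exact Or.inr (Or.inr (Or.inl ⟨Fin.last n, fun ω => by simp [hφ]⟩))
    · refine Fin.lastCases ?_ (fun j => ?_) i'
      · exact Or.inr (Or.inr (Or.inr ⟨Fin.last n, fun ω => by simp [hφ]⟩))
      · exact Or.inr (Or.inr (Or.inl ⟨j.castSucc, fun ω => by simp [hφ]⟩))
  have e1 : ∀ ω, φ ω aIdx = !(ω (Fin.last n)) := by
    intro ω; simp [hφ, haIdx]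
  have e2 : ∀ ω, φ ω bIdx = ω (Fin.last n) := by
    intro ω; simp [hφ, hbIdx]
  have e3 : ∀ ω, vv (φ ω) = Fin.init ω := by
    intro ω; funext j; simp [hφ, hvv, Fin.init]
  have hφnotU : ∀ ω, φ ω ∉ U := by
    intro ω
    rw [hU, Finset.mem_filter]
    rintro ⟨-, h1, h2⟩
    rw [e1 ω] at h1
    rw [e2 ω] at h2
    rw [h2] at h1
    exact absurd h1 (by simp)
  have hfinal : (fun ω : Fin (n + 1) → Bool => if ω (Fin.last n) = true then c' ω else c ω)
      = fun ω => ψhat (φ ω) := by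
    funext ω
    rw [hagr (φ ω) (hφnotU ω)]
    simp only [hψ, e1 ω, e2 ω, e3 ω]
    cases hs : ω (Fin.last n)
    · simp only [Bool.not_false, Bool.false_eq_true, if_false, if_true, if_pos rfl]
      conv_rhs => rw [show (false : Bool) = ω (Fin.last n) from hs.symm]
      rw [Fin.snoc_init_self]
    · simp only [Bool.not_true, Bool.false_eq_true, if_false, if_true, if_pos rfl]
      conv_rhs => rw [show (true : Bool) = ω (Fin.last n) from hs.symm]
      rw [Fin.snoc_init_self]
  rw [hfinal]
  exact CS.C_morph φ hφm ψhat hψhatC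


end FibrantGlue

/-- A cubespace with `k`-completion for all `k` satisfies the glueing
property. -/
theorem fibrant_implies_glueing {X : Type*} (CS : Cubespace X)
    (hcomp : ∀ n, HasCompletion CS n) : HasGlueing CS := by
  intro n c c' hc hc' hmatch
  exact FibrantGlue.fibrant_implies_glueing' CS hcomp n c c' hc hc' hmatch
end

section
/- Let X be a cubespace with the glueing property, and s ≥ 0. Then x ∼_s y (i.e. there exist c, c' ∈ C^{s+1}(X) with c(1⃗) = x, c'(1⃗) = y, and c(ω) = c'(ω) for all ω ≠ 1⃗) holds if and only if the configuration equal to x at every vertex except the top vertex, where it equals y, lies in C^{s+1}(X). -/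
open Function

def setTrueOn {n : ℕ} (T : Finset (Fin n)) (ω : Fin n → Bool) : Fin n → Bool :=
  fun i => if i ∈ T then true else ω i

@[simp]
lemma setTrueOn_empty {n : ℕ} (ω : Fin n → Bool) : setTrueOn ∅ ω = ω := by
  funext i; simp [setTrueOn]

@[simp]
lemma setTrueOn_univ {n : ℕ} (ω : Fin n → Bool) : setTrueOn Finset.univ ω = topVert n := by
  funext i; simp [setTrueOn, topVert]

lemma setTrueOn_update_true {n : ℕ} (T : Finset (Fin n)) (k : Fin n) (ω : Fin n → Bool) :
    setTrueOn T (update ω k true) = setTrueOn (insert k T) ω := by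
  funext i
  rcases eq_or_ne i k with rfl | hi <;> simp [setTrueOn, *]

namespace IsCubeMorphism

lemma comp_right {k l : ℕ} (f : Fin l → Fin k) :
    IsCubeMorphism (fun ω : Fin k → Bool => ω ∘ f) :=
  fun i => Or.inr <| Or.inr <| Or.inl ⟨f i, fun _ => rfl⟩

lemma setTrueOn {n : ℕ} (T : Finset (Fin n)) : IsCubeMorphism (setTrueOn T) := by
  intro i
  by_cases hi : i ∈ T
  · exact Or.inr <| Or.inl fun ω => if_pos hi
  · exact Or.inr <| Or.inr <| Or.inl ⟨i, fun ω => if_neg hi⟩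

lemma update_not {n : ℕ} (k : Fin n) :
    IsCubeMorphism (fun ω : Fin n → Bool => update ω k (!ω k)) := by
  intro i
  rcases eq_or_ne i k with rfl | hi
  · exact Or.inr <| Or.inr <| Or.inr ⟨i, fun ω => update_self ..⟩
  · exact Or.inr <| Or.inr <| Or.inl ⟨i, fun ω => update_of_ne hi ..⟩

end IsCubeMorphism

namespace Cubespace

variable {X : Type*} (CS : Cubespace X)

lemma const_mem (k : ℕ) (x : X) : (fun _ : Fin k → Bool => x) ∈ CS.C k :=
  CS.C_morph (l := 0) (fun _ => Fin.elim0) (fun i => i.elim0) (fun _ => x) (by simp [CS.C_zero])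

end Cubespace

namespace HasGlueing

variable {X : Type*} {CS : Cubespace X}

/-- Reduced to glueing along the last coordinate by conjugating with the transposition of `k`
and `Fin.last n`. -/
lemma ite_mem {n : ℕ} (hglue : HasGlueing CS) (k : Fin (n + 1))
    {c c' : (Fin (n + 1) → Bool) → X} (hc : c ∈ CS.C (n + 1)) (hc' : c' ∈ CS.C (n + 1))
    (hcc' : ∀ ω, ω k = false → c (update ω k true) = c' ω) :
    (fun ω => if ω k = true then c' ω else c ω) ∈ CS.C (n + 1) := by
  set τ := Equiv.swap k (Fin.last n)
  set P : (Fin (n + 1) → Bool) → (Fin (n + 1) → Bool) := fun ω => ω ∘ τ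
  have hP : IsCubeMorphism P := IsCubeMorphism.comp_right τ
  have hPP : ∀ ω, P (P ω) = ω := fun ω => by
    funext i; simp [P, τ, Equiv.swap_apply_self]
  have hglued := hglue n (c ∘ P) (c' ∘ P) (CS.C_morph P hP c hc) (CS.C_morph P hP c' hc') ?_
  · convert CS.C_morph P hP _ hglued using 1
    funext ω
    simp [P, τ, hPP]
  · intro ω
    have hupd : P (Fin.snoc ω true) = update (P (Fin.snoc ω false)) k true := by
      rw [← Fin.update_snoc_last (α := fun _ => Bool) (p := ω) (x := false) (z := true)]
      simp only [P, update_comp_equiv, τ, Equiv.symm_swap, Equiv.swap_apply_right]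
    simp only [comp_apply, hupd]
    exact hcc' _ (by simp [P, τ])

lemma exists_mem_agree_update {n : ℕ} (hglue : HasGlueing CS) (k : Fin (n + 1))
    {d e : (Fin (n + 1) → Bool) → X} (hd : d ∈ CS.C (n + 1)) (he : e ∈ CS.C (n + 1))
    (hde : ∀ ω, ω ≠ topVert (n + 1) → d ω = e ω) :
    ∃ d' ∈ CS.C (n + 1), d' (topVert (n + 1)) = d (topVert (n + 1)) ∧
      ∀ ω, ω ≠ topVert (n + 1) → d' ω = e (update ω k true) := by
  set flip : (Fin (n + 1) → Bool) → (Fin (n + 1) → Bool) := fun ω => update ω k (!ω k)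
  have hflip : e ∘ flip ∈ CS.C (n + 1) := CS.C_morph flip (IsCubeMorphism.update_not k) e he
  refine ⟨_, hglue.ite_mem k hflip hd fun ω hωk => ?_, if_pos rfl, fun ω hω => ?_⟩
  · have hω : ω ≠ topVert (n + 1) := fun h => by simp [h, topVert] at hωk
    simp [flip, ← hωk, hde ω hω]
  · by_cases hωk : ω k = true
    · rw [if_pos hωk, hde ω hω, ← hωk, update_eq_self]
    · simp [flip, hωk]

lemma mem_of_agree_off_top {n : ℕ} (hglue : HasGlueing CS)
    {c c' : (Fin (n + 1) → Bool) → X} (hc : c ∈ CS.C (n + 1)) (hc' : c' ∈ CS.C (n + 1))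
    (hcc' : ∀ ω, ω ≠ topVert (n + 1) → c ω = c' ω) :
    (fun ω => if ω = topVert (n + 1) then c' (topVert (n + 1)) else c (topVert (n + 1))) ∈
      CS.C (n + 1) := by
  have key : ∀ T : Finset (Fin (n + 1)), ∃ d ∈ CS.C (n + 1),
      d (topVert (n + 1)) = c' (topVert (n + 1)) ∧
        ∀ ω, ω ≠ topVert (n + 1) → d ω = c (setTrueOn T ω) := by
    intro T
    induction T using Finset.induction_on with
    | empty => exact ⟨c', hc', rfl, fun ω hω => by simpa using (hcc' ω hω).symm⟩
    | insert k T _ ih =>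
      obtain ⟨d, hd, hdtop, hdc⟩ := ih
      obtain ⟨d', hd', hd'top, hd'c⟩ := hglue.exists_mem_agree_update k hd
        (CS.C_morph _ (IsCubeMorphism.setTrueOn T) c hc) hdc
      refine ⟨d', hd', hd'top.trans hdtop, fun ω hω => ?_⟩
      rw [hd'c ω hω, comp_apply, setTrueOn_update_true]
  obtain ⟨d, hd, hdtop, hdc⟩ := key Finset.univ
  convert hd using 1
  funext ω
  split_ifs with hω
  · rw [hω, hdtop]
  · rw [hdc ω hω, setTrueOn_univ]

end HasGlueing

/-- In a cubespace with the glueing property, `x ∼_s y` (there exist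
`(s+1)`-cubes `c, c'` agreeing off the top vertex with `c(⃗1) = x`, `c'(⃗1) = y`) holds iff
the configuration equal to `x` at every vertex except the top vertex, where it is `y`, is an
`(s+1)`-cube. -/
theorem sim_iff_corner_config {X : Type*} (CS : Cubespace X) (hglue : HasGlueing CS)
    (s : ℕ) (x y : X) :
    (∃ c ∈ CS.C (s + 1), ∃ c' ∈ CS.C (s + 1),
        c (topVert (s + 1)) = x ∧ c' (topVert (s + 1)) = y ∧
        ∀ ω, ω ≠ topVert (s + 1) → c ω = c' ω) ↔
      (fun ω => if ω = topVert (s + 1) then y else x) ∈ CS.C (s + 1) := by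
  constructor
  · rintro ⟨c, hc, c', hc', rfl, rfl, hcc'⟩
    exact hglue.mem_of_agree_off_top hc hc' hcc'
  · intro h
    exact ⟨fun _ => x, CS.const_mem _ x, _, h, rfl, if_pos rfl, fun ω hω => (if_neg hω).symm⟩
end

section
/- Let X be a cubespace with the glueing property and s ≥ 0. Then the relation ∼_s (x ∼_s y iff the configuration which is x at all vertices of {0,1}^{s+1} except the top vertex and y at the top vertex is an (s+1)-cube) is an equivalence relation on X. -/
/-! If `a ∼ b`, then in any `(s+1)`-cube `c` the value `a` at a vertex may be replaced by `b`.
At the top vertex, retract `c` onto the faces `{ω | ω j = 1 for j ≥ m}`: for `m = 0` the retract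
is the constant cube `a`, where the replacement is the hypothesis `a ∼ b`, and passing from `m`
to `m + 1` is one glueing along coordinate `m`. A reflection of the discrete cube moves any vertex
to the top one. Transitivity is one replacement at the top vertex; symmetry replaces, in the
constant cube `x`, every vertex but the top one by `y`. -/

open Function

def retract {k : ℕ} (m : ℕ) (ω : Fin k → Bool) : Fin k → Bool :=
  fun i => if (i : ℕ) < m then ω i else true

lemma retract_zero {k : ℕ} (ω : Fin k → Bool) : retract 0 ω = topVert k := rfl

lemma retract_of_le {k m : ℕ} (h : k ≤ m) (ω : Fin k → Bool) : retract m ω = ω :=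
  funext fun i => if_pos (by omega)

lemma retract_update_of_le {k m : ℕ} {i : Fin k} (h : m ≤ i) (ω : Fin k → Bool) (b : Bool) :
    retract m (update ω i b) = retract m ω := by
  funext j
  by_cases hj : (j : ℕ) < m
  · simp only [retract, if_pos hj, update_of_ne (show j ≠ i by omega)]
  · simp only [retract, if_neg hj]

lemma retract_succ {k m : ℕ} (hm : m < k) {ω : Fin k → Bool} (hω : ω ⟨m, hm⟩ = true) :
    retract (m + 1) ω = retract m ω := by
  funext j
  by_cases hj : (j : ℕ) < m
  · simp only [retract, if_pos hj, if_pos (show (j : ℕ) < m + 1 by omega)]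
  · by_cases hjm : (j : ℕ) = m
    · simp only [retract, if_neg hj, if_pos (show (j : ℕ) < m + 1 by omega)]
      rwa [show j = ⟨m, hm⟩ from Fin.ext hjm]
    · simp only [retract, if_neg hj, if_neg (show ¬ (j : ℕ) < m + 1 by omega)]

def reflect {k : ℕ} (v ω : Fin k → Bool) : Fin k → Bool :=
  fun i => ω i == v i

lemma reflect_reflect {k : ℕ} (v ω : Fin k → Bool) : reflect v (reflect v ω) = ω :=
  funext fun i => by simp only [reflect]; cases ω i <;> cases v i <;> rfl

lemma reflect_topVert {k : ℕ} (v : Fin k → Bool) : reflect v (topVert k) = v :=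
  funext fun i => by simp only [reflect, topVert]; cases v i <;> rfl

lemma reflect_eq_topVert_iff {k : ℕ} {v ω : Fin k → Bool} :
    reflect v ω = topVert k ↔ ω = v :=
  ⟨fun h => by rw [← reflect_reflect v ω, h, reflect_topVert],
    fun h => h ▸ funext fun _ => beq_self_eq_true _⟩

namespace IsCubeMorphism

lemma comp_perm {k : ℕ} (e : Equiv.Perm (Fin k)) :
    IsCubeMorphism (fun ω : Fin k → Bool => ω ∘ e) :=
  fun i => Or.inr (Or.inr (Or.inl ⟨e i, fun _ => rfl⟩))

lemma retract {k : ℕ} (m : ℕ) : IsCubeMorphism (retract (k := k) m) := by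
  intro i
  by_cases hi : (i : ℕ) < m
  · exact Or.inr (Or.inr (Or.inl ⟨i, fun ω => if_pos hi⟩))
  · exact Or.inr (Or.inl fun ω => if_neg hi)

lemma reflect {k : ℕ} (v : Fin k → Bool) : IsCubeMorphism (reflect v) := by
  intro i
  cases hv : v i
  · exact Or.inr (Or.inr (Or.inr ⟨i, fun ω => by simp [_root_.reflect, hv]⟩))
  · exact Or.inr (Or.inr (Or.inl ⟨i, fun ω => by simp [_root_.reflect, hv]⟩))

end IsCubeMorphism

namespace Cubespace

variable {X : Type*} (CS : Cubespace X)

lemma comp_mem {k l : ℕ} {ρ : (Fin k → Bool) → (Fin l → Bool)} (hρ : IsCubeMorphism ρ)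
    {c : (Fin l → Bool) → X} (hc : c ∈ CS.C l) : (fun ω => c (ρ ω)) ∈ CS.C k :=
  CS.C_morph ρ hρ c hc

/-- Transport along a coordinate permutation sending `i` to the last coordinate. -/
lemma glue_at (hglue : HasGlueing CS) {n : ℕ} (i : Fin (n + 1))
    {c c' : (Fin (n + 1) → Bool) → X} (hc : c ∈ CS.C (n + 1)) (hc' : c' ∈ CS.C (n + 1))
    (hmatch : ∀ ω, c (update ω i true) = c' (update ω i false)) :
    (fun ω => if ω i = true then c' ω else c ω) ∈ CS.C (n + 1) := by
  set e := Equiv.swap i (Fin.last n)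
  have he : e.symm (Fin.last n) = i := Equiv.swap_apply_right _ _
  have hsnoc : ∀ (ω : Fin n → Bool) (b : Bool),
      update ((Fin.snoc ω false : Fin (n + 1) → Bool) ∘ e) i b = Fin.snoc ω b ∘ e := by
    intro ω b
    rw [← he, ← update_comp_equiv, Fin.update_snoc_last]
  have hglued := hglue n _ _ (CS.comp_mem (.comp_perm e) hc) (CS.comp_mem (.comp_perm e) hc')
    fun ω => by simpa only [hsnoc] using hmatch (Fin.snoc ω false ∘ e)
  convert CS.comp_mem (.comp_perm e.symm) hglued using 2 with ω
  simp [he, comp_assoc]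

/-- Induction on `m`: `c ∘ retract m` with its top value replaced by `b` is a cube. For `m = 0`
this is `hab`; the step glues it, as the face `ω m = 1`, to `c ∘ retract (m + 1)`. -/
lemma update_top_mem (hglue : HasGlueing CS) {n : ℕ} {a b : X}
    (hab : update (fun _ => a) (topVert (n + 1)) b ∈ CS.C (n + 1))
    {c : (Fin (n + 1) → Bool) → X} (hc : c ∈ CS.C (n + 1)) (hca : c (topVert (n + 1)) = a) :
    update c (topVert (n + 1)) b ∈ CS.C (n + 1) := by
  suffices ∀ m ≤ n + 1, update (fun ω => c (retract m ω)) (topVert (n + 1)) b ∈ CS.C (n + 1) by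
    simpa only [retract_of_le le_rfl] using this (n + 1) le_rfl
  intro m hm
  induction m with
  | zero => simpa only [retract_zero, hca] using hab
  | succ m ih =>
    set i : Fin (n + 1) := ⟨m, hm⟩
    have hglued := CS.glue_at hglue i (CS.comp_mem (IsCubeMorphism.retract (m + 1)) hc)
      (ih (by omega)) fun ω => by
        have hne : update ω i false ≠ topVert (n + 1) := fun h => by
          simpa [topVert] using congrFun h i
        rw [update_of_ne hne, retract_succ hm (update_self _ _ _),
          retract_update_of_le (i := i) le_rfl, retract_update_of_le (i := i) le_rfl]
    convert hglued using 2 with ω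
    by_cases hωi : ω i = true
    · simp only [hωi, if_true, update_apply, retract_succ hm hωi]
    · have hne : ω ≠ topVert (n + 1) := fun h => hωi (h ▸ rfl)
      simp [hωi, hne]

lemma update_mem (hglue : HasGlueing CS) {n : ℕ} {a b : X}
    (hab : update (fun _ => a) (topVert (n + 1)) b ∈ CS.C (n + 1))
    {c : (Fin (n + 1) → Bool) → X} (hc : c ∈ CS.C (n + 1)) {v : Fin (n + 1) → Bool}
    (hca : c v = a) : update c v b ∈ CS.C (n + 1) := by
  have h := CS.comp_mem (IsCubeMorphism.reflect v) (CS.update_top_mem hglue hab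
    (CS.comp_mem (IsCubeMorphism.reflect v) hc) (by rwa [reflect_topVert]))
  convert h using 2 with ω
  simp only [update_apply, reflect_eq_topVert_iff, reflect_reflect]

lemma piecewise_mem (hglue : HasGlueing CS) {n : ℕ} {a b : X}
    (hab : update (fun _ => a) (topVert (n + 1)) b ∈ CS.C (n + 1))
    {c : (Fin (n + 1) → Bool) → X} (hc : c ∈ CS.C (n + 1)) (S : Finset (Fin (n + 1) → Bool))
    (hS : ∀ v ∈ S, c v = a) : S.piecewise (fun _ => b) c ∈ CS.C (n + 1) := by
  induction S using Finset.induction_on with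
  | empty => rwa [Finset.piecewise_empty]
  | insert v S hv ih =>
    rw [Finset.piecewise_insert]
    refine CS.update_mem hglue hab (ih fun w hw => hS w (Finset.mem_insert_of_mem hw)) ?_
    rw [Finset.piecewise_eq_of_notMem _ _ _ hv]
    exact hS v (Finset.mem_insert_self v S)

end Cubespace

/-- In a cubespace with the glueing property, the relation `∼_s`
(`x ∼_s y` iff the configuration which is `x` at all vertices except the top vertex and `y`
at the top vertex is an `(s+1)`-cube) is an equivalence relation. -/
theorem sim_equivalence {X : Type*} (CS : Cubespace X) (hglue : HasGlueing CS) (s : ℕ) :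
    Equivalence (fun x y : X =>
      (fun ω : Fin (s + 1) → Bool => if ω = topVert (s + 1) then y else x)
        ∈ CS.C (s + 1)) := by
  have h_update : ∀ x y : X, (fun ω : Fin (s + 1) → Bool => if ω = topVert (s + 1) then y else x)
      = update (fun _ => x) (topVert (s + 1)) y :=
    fun x y => funext fun ω => by rw [update_apply]
  simp only [h_update]
  refine ⟨fun x => ?refl, fun {x y} hxy => ?symm, fun {x y z} hxy hyz => ?trans⟩
  case refl => simpa only [update_eq_self] using CS.const_mem (s + 1) x
  case symm =>
    convert CS.piecewise_mem hglue hxy (CS.const_mem _ x) (Finset.univ.erase (topVert (s + 1)))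
      (fun _ _ => rfl) using 1
    funext ω
    by_cases hω : ω = topVert (s + 1) <;> simp [hω]
  case trans => simpa only [update_idem] using CS.update_top_mem hglue hyz hxy (update_self _ _ _)
end

section
/- Let f : X → Y and g : Y → Z be maps of cubespaces where f is a fibration and g ∘ f is a fibration. Then g is a fibration. In particular, if f : X → Y is a fibration and X is fibrant (has k-completion for all k), then Y is fibrant. -/
/-!
A corner of `Y` lifts along the fibration `f` to a corner of `X`, vertex by vertex in order of
increasing weight: the value at a vertex `v` comes from the corner-completion property of `f`
applied to the face below `v`, all of whose other vertices are already lifted. Cubes of `Y`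
then lift to cubes of `X` as well, so `g` maps them to cubes of `Z`; and a corner of `Y` is
completed (over a cube of `Z`, or absolutely when `X` is fibrant) by completing a lift of it in
`X` and pushing the result forward along `f`.
-/

open Finset Function

lemma topVert_eq_top (k : ℕ) : topVert k = ⊤ := rfl

section CubeMorphism

variable {k l : ℕ}

lemma isCubeMorphism_of_coord {ρ : (Fin k → Bool) → (Fin l → Bool)}
    (h : ∀ i, (∀ ω, ρ ω i = false) ∨ ∃ j, ∀ ω, ρ ω i = ω j) : IsCubeMorphism ρ :=
  fun i => (h i).imp_right fun hj => Or.inr (Or.inl hj)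

lemma isCubeMorphism_comp_right (σ : Fin l → Fin k) :
    IsCubeMorphism fun ω : Fin k → Bool => ω ∘ σ :=
  isCubeMorphism_of_coord fun i => Or.inr ⟨σ i, fun _ => rfl⟩

lemma isCubeMorphism_inf (v : Fin k → Bool) : IsCubeMorphism (v ⊓ ·) :=
  isCubeMorphism_of_coord fun i => by
    cases h : v i
    · exact Or.inl fun ω => by simp [h]
    · exact Or.inr ⟨i, fun ω => by simp [h]⟩

lemma isCubeMorphism_insertNth_false (i : Fin (k + 1)) :
    IsCubeMorphism fun ω : Fin k → Bool => i.insertNth false ω :=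
  isCubeMorphism_of_coord fun j => by
    rcases eq_or_ne j i with rfl | hj
    · exact Or.inl fun ω => Fin.insertNth_apply_same _ _ _
    · obtain ⟨s, rfl⟩ := Fin.exists_succAbove_eq hj
      exact Or.inr ⟨s, fun ω => Fin.insertNth_apply_succAbove _ _ _ _⟩

lemma isCubeMorphism_extend_bot (ι : Fin k → Fin l) :
    IsCubeMorphism fun ω : Fin k → Bool => extend ι ω ⊥ :=
  isCubeMorphism_of_coord fun i => by
    classical
    by_cases h : ∃ j, ι j = i
    · exact Or.inr ⟨h.choose, fun ω => by rw [extend_def, dif_pos h]⟩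
    · exact Or.inl fun ω => by rw [extend_apply' _ _ _ h]; rfl

end CubeMorphism

namespace Cubespace

variable {X : Type*} (CS : Cubespace X)

lemma const_mem_C (k : ℕ) (x : X) : (fun _ => x) ∈ CS.C k :=
  CS.C_morph (fun _ => Fin.elim0) (fun i => i.elim0) (fun _ => x) (CS.C_zero ▸ trivial)

/-- `fun ω => lam (v ⊓ ω)` is the face of `lam` below the vertex `v`, parametrised degenerately
by the whole cube. -/
lemma isCubeCorner_iff {n : ℕ} {lam : (Fin (n + 1) → Bool) → X} :
    IsCubeCorner CS n lam ↔ ∀ v ≠ ⊤, (fun ω => lam (v ⊓ ω)) ∈ CS.C (n + 1) := by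
  constructor
  · intro h v hv
    obtain ⟨i, hi⟩ : ∃ i, v i = false := by simpa [funext_iff] using hv
    have : (fun ω => lam (v ⊓ ω)) =
        ((fun ω' => lam (i.insertNth false ω')) ∘ fun ω => ω ∘ i.succAbove) ∘ (v ⊓ ·) := by
      funext ω
      simp only [comp_apply]
      congr 1
      have hωi : (v ⊓ ω) i = false := by simp [hi]
      conv_rhs => rw [← hωi]
      exact (Fin.insertNth_self_removeNth i _).symm
    rw [this]
    exact CS.C_morph _ (isCubeMorphism_inf v) _
      (CS.C_morph _ (isCubeMorphism_comp_right _) _ (h i))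
  · intro h i
    set u : Fin (n + 1) → Bool := i.insertNth false ⊤
    have hle : ∀ ω' : Fin n → Bool, i.insertNth false ω' ≤ u := fun ω' => by
      rw [Fin.insertNth_le_iff]
      exact ⟨by simp [u], fun j => by simp [u]⟩
    have hne : u ≠ ⊤ := fun h' => by simpa [u] using congrFun h' i
    have : (fun ω' => lam (i.insertNth false ω')) =
        (fun ω => lam (u ⊓ ω)) ∘ fun ω' => i.insertNth false ω' := by
      funext ω'
      simp only [comp_apply, inf_eq_right.mpr (hle ω')]
    rw [this]
    exact CS.C_morph _ (isCubeMorphism_insertNth_false i) _ (h _ hne)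

lemma isCubeCorner_of_mem {n : ℕ} {c : (Fin (n + 1) → Bool) → X} (hc : c ∈ CS.C (n + 1)) :
    IsCubeCorner CS n c :=
  CS.isCubeCorner_iff.mpr fun v _ => CS.C_morph _ (isCubeMorphism_inf v) c hc

end Cubespace

section Weight

variable {N : ℕ}

def weight (v : Fin N → Bool) : ℕ := #{i | v i = true}

lemma weight_lt_weight {v w : Fin N → Bool} (h : v < w) : weight v < weight w := by
  obtain ⟨hle, i, hi⟩ := Pi.lt_def.mp h
  apply card_lt_card
  rw [Finset.ssubset_iff_of_subset]
  · have : v i = false ∧ w i = true := by revert hi; cases v i <;> cases w i <;> decide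
    exact ⟨i, by simp [this]⟩
  · intro j hj
    simp only [mem_filter, mem_univ, true_and] at hj ⊢
    exact top_le_iff.mp (by simpa [hj] using hle j)

lemma weight_le_of_ne_top {n : ℕ} {v : Fin (n + 1) → Bool} (hv : v ≠ ⊤) : weight v ≤ n := by
  have hlt := weight_lt_weight (lt_top_iff_ne_top.mpr hv)
  have htop : weight (⊤ : Fin (n + 1) → Bool) = n + 1 := by simp [weight]
  omega

lemma weight_le_weight {v w : Fin N → Bool} (h : v ≤ w) : weight v ≤ weight w := by
  rcases h.lt_or_eq with h | rfl
  exacts [(weight_lt_weight h).le, le_rfl]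

lemma eq_bot_of_weight_eq_zero {v : Fin N → Bool} (h : weight v = 0) : v = ⊥ := by
  rw [weight, card_eq_zero, filter_eq_empty_iff] at h
  funext i
  simpa using h (mem_univ i)

lemma exists_injective_extend_top_eq {v : Fin N → Bool} {k : ℕ} (h : weight v = k) :
    ∃ ι : Fin k → Fin N, Injective ι ∧ extend ι ⊤ ⊥ = v := by
  set s : Finset (Fin N) := {i | v i = true}
  have hs : #s = k := h
  refine ⟨s.orderEmbOfFin hs, (s.orderEmbOfFin hs).injective, funext fun i => ?_⟩
  by_cases hi : v i = true
  · obtain ⟨j, rfl⟩ : i ∈ Set.range (s.orderEmbOfFin hs) := by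
      rw [range_orderEmbOfFin]
      simpa [s] using hi
    rw [(s.orderEmbOfFin hs).injective.extend_apply, hi]
    rfl
  · rw [extend_apply']
    · simpa using hi
    · rintro ⟨j, rfl⟩
      exact hi (mem_filter.mp (s.orderEmbOfFin_mem hs j)).2

end Weight

/-! For injective `ι`, `fun a => extend ι a ⊥` parametrises the face below `extend ι ⊤ ⊥`
non-degenerately, and `(· ∘ ι)` retracts onto it. -/

section Extend

variable {k N : ℕ} (ι : Fin k → Fin N)

lemma extend_bot_inf (a b : Fin k → Bool) :
    extend ι (a ⊓ b) ⊥ = extend ι a ⊥ ⊓ extend ι b ⊥ := by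
  classical
  funext i
  simp only [Pi.inf_apply, extend_def]
  split_ifs <;> rfl

lemma extend_bot_mono : Monotone fun a : Fin k → Bool => extend ι a ⊥ := fun a b h => by
  rw [← inf_eq_left] at h ⊢
  rw [← extend_bot_inf, h]

lemma extend_bot_injective {ι : Fin k → Fin N} (hι : Injective ι) :
    Injective fun a : Fin k → Bool => extend ι a ⊥ := fun a b h => funext fun j => by
  simpa [hι.extend_apply] using congrFun h (ι j)

lemma extend_bot_strictMono {ι : Fin k → Fin N} (hι : Injective ι) :
    StrictMono fun a : Fin k → Bool => extend ι a ⊥ :=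
  (extend_bot_mono ι).strictMono_of_injective (extend_bot_injective hι)

lemma extend_bot_comp (ω : Fin N → Bool) : extend ι (ω ∘ ι) ⊥ = extend ι ⊤ ⊥ ⊓ ω := by
  classical
  funext i
  simp only [Pi.inf_apply, extend_def]
  split_ifs with h
  · simp [h.choose_spec]
  · simp

lemma comp_eq_top_iff {ι : Fin k → Fin N} (hι : Injective ι) (ω : Fin N → Bool) :
    ω ∘ ι = ⊤ ↔ extend ι ⊤ ⊥ ⊓ ω = extend ι ⊤ ⊥ := by
  rw [← extend_bot_comp]
  exact (extend_bot_injective hι).eq_iff.symm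

end Extend

section Lifting

variable {X Y : Type*} {CX : Cubespace X} {CY : Cubespace Y} {f : X → Y}

lemma IsFibration.exists_fill_vertex (hf : IsFibration CX CY f) {m N : ℕ}
    {ι : Fin (m + 1) → Fin N} (hι : Injective ι) {v : Fin N → Bool} (hιv : extend ι ⊤ ⊥ = v)
    {μ : (Fin N → Bool) → Y} {lam : (Fin N → Bool) → X} (hlam : ∀ ω, f (lam ω) = μ ω)
    (hμ : (fun ω => μ (v ⊓ ω)) ∈ CY.C N)
    (hlam_lt : ∀ w < v, (fun ω => lam (w ⊓ ω)) ∈ CX.C N) :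
    ∃ x, f x = μ v ∧ (fun ω => if v ⊓ ω = v then x else lam (v ⊓ ω)) ∈ CX.C N := by
  subst hιv
  set E : (Fin (m + 1) → Bool) → Fin N → Bool := fun ω => extend ι ω ⊥
  have hcorner : IsCubeCorner CX m (lam ∘ E) := CX.isCubeCorner_iff.mpr fun w hw => by
    have : (fun ω => (lam ∘ E) (w ⊓ ω)) = (fun ω => lam (E w ⊓ ω)) ∘ E :=
      funext fun ω => congrArg lam (extend_bot_inf ι w ω)
    rw [this]
    exact CX.C_morph _ (isCubeMorphism_extend_bot ι) _
      (hlam_lt _ (extend_bot_strictMono hι (lt_top_iff_ne_top.mpr hw)))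
  have hcube : μ ∘ E ∈ CY.C (m + 1) := by
    have : μ ∘ E = (fun ω => μ (E ⊤ ⊓ ω)) ∘ E :=
      funext fun ω => congrArg μ (inf_eq_right.mpr (extend_bot_mono ι le_top)).symm
    rw [this]
    exact CY.C_morph _ (isCubeMorphism_extend_bot ι) _ hμ
  obtain ⟨x, hx, hxcube⟩ := hf.2.2 m (lam ∘ E) (μ ∘ E) hcorner hcube fun ω _ => hlam _
  refine ⟨x, hx, ?_⟩
  have : (fun ω => if E ⊤ ⊓ ω = E ⊤ then x else lam (E ⊤ ⊓ ω)) =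
      (fun ω' => if ω' = topVert (m + 1) then x else (lam ∘ E) ω') ∘ (· ∘ ι) := by
    funext ω
    simp only [comp_apply, topVert_eq_top, comp_eq_top_iff hι, E, extend_bot_comp]
  rw [this]
  exact CX.C_morph _ (isCubeMorphism_comp_right ι) _ hxcube

lemma IsFibration.exists_lift_weight_succ (hf : IsFibration CX CY f) {N m : ℕ}
    {μ : (Fin N → Bool) → Y} (hμ : ∀ v ≠ ⊤, (fun ω => μ (v ⊓ ω)) ∈ CY.C N)
    {lam : (Fin N → Bool) → X} (hlam : ∀ ω, f (lam ω) = μ ω)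
    (hsub : ∀ v ≠ ⊤, weight v ≤ m → (fun ω => lam (v ⊓ ω)) ∈ CX.C N) :
    ∃ lam' : (Fin N → Bool) → X, (∀ ω, f (lam' ω) = μ ω) ∧
      ∀ v ≠ ⊤, weight v ≤ m + 1 → (fun ω => lam' (v ⊓ ω)) ∈ CX.C N := by
  have hfill : ∀ v ≠ ⊤, weight v = m + 1 → ∃ x, f x = μ v ∧
      (fun ω => if v ⊓ ω = v then x else lam (v ⊓ ω)) ∈ CX.C N := by
    intro v hv hwv
    obtain ⟨ι, hι, hιv⟩ := exists_injective_extend_top_eq hwv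
    refine hf.exists_fill_vertex hι hιv hlam (hμ v hv) fun w hw => ?_
    have := weight_lt_weight hw
    exact hsub w (hw.trans_le le_top).ne (by omega)
  classical
  have : Nonempty X := ⟨lam ⊥⟩
  choose! x hxμ hxcube using hfill
  set lam' : (Fin N → Bool) → X := fun ω => if ω ≠ ⊤ ∧ weight ω = m + 1 then x ω else lam ω
  have lam'_of_le : ∀ ω, weight ω ≤ m → lam' ω = lam ω := fun ω h => if_neg (by omega)
  refine ⟨lam', fun ω => ?_, fun v hv hwv => ?_⟩
  · by_cases h : ω ≠ ⊤ ∧ weight ω = m + 1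
    · simp only [lam', if_pos h, hxμ ω h.1 h.2]
    · simp only [lam', if_neg h, hlam ω]
  rcases hwv.lt_or_eq with hlt | heq
  · have : (fun ω => lam' (v ⊓ ω)) = fun ω => lam (v ⊓ ω) := funext fun ω =>
      lam'_of_le _ ((weight_le_weight inf_le_left).trans (Nat.lt_succ_iff.mp hlt))
    rw [this]
    exact hsub v hv (Nat.lt_succ_iff.mp hlt)
  · convert hxcube v hv heq using 2 with ω
    split_ifs with hvω
    · rw [hvω]
      exact if_pos ⟨hv, heq⟩
    · have := weight_lt_weight (inf_le_left.lt_of_ne hvω)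
      exact lam'_of_le _ (by omega)

lemma IsFibration.exists_lift_of_weight_le (hf : IsFibration CX CY f) {N : ℕ}
    {μ : (Fin N → Bool) → Y} (hμ : ∀ v ≠ ⊤, (fun ω => μ (v ⊓ ω)) ∈ CY.C N) (m : ℕ) :
    ∃ lam : (Fin N → Bool) → X, (∀ ω, f (lam ω) = μ ω) ∧
      ∀ v ≠ ⊤, weight v ≤ m → (fun ω => lam (v ⊓ ω)) ∈ CX.C N := by
  induction m with
  | zero =>
    refine ⟨fun ω => surjInv hf.2.1 (μ ω), fun ω => surjInv_eq _ _, fun v _ hv => ?_⟩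
    rw [eq_bot_of_weight_eq_zero (Nat.le_zero.mp hv)]
    simpa only [bot_inf_eq] using CX.const_mem_C N _
  | succ m ih =>
    obtain ⟨lam, hlam, hsub⟩ := ih
    exact hf.exists_lift_weight_succ hμ hlam hsub

lemma IsFibration.exists_corner_lift (hf : IsFibration CX CY f) {n : ℕ}
    {μ : (Fin (n + 1) → Bool) → Y} (hμ : IsCubeCorner CY n μ) :
    ∃ lam, IsCubeCorner CX n lam ∧ ∀ ω, f (lam ω) = μ ω := by
  obtain ⟨lam, hlam, hsub⟩ := hf.exists_lift_of_weight_le (CY.isCubeCorner_iff.mp hμ) n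
  exact ⟨lam, CX.isCubeCorner_iff.mpr fun v hv => hsub v hv (weight_le_of_ne_top hv), hlam⟩

lemma IsFibration.exists_cube_lift (hf : IsFibration CX CY f) {k : ℕ}
    {c : (Fin k → Bool) → Y} (hc : c ∈ CY.C k) : ∃ e ∈ CX.C k, ∀ ω, f (e ω) = c ω := by
  cases k with
  | zero => exact ⟨fun ω => surjInv hf.2.1 (c ω), CX.C_zero ▸ trivial, fun ω => surjInv_eq _ _⟩
  | succ n =>
    obtain ⟨lam, hlam, hflam⟩ := hf.exists_corner_lift (CY.isCubeCorner_of_mem hc)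
    obtain ⟨x, hx, hxcube⟩ := hf.2.2 n lam c hlam hc fun ω _ => hflam ω
    refine ⟨_, hxcube, fun ω => ?_⟩
    split_ifs with h
    · rw [hx, h]
    · exact hflam ω

lemma IsMorphism.completion_mem (hf : IsMorphism CX CY f) {n : ℕ}
    {lam : (Fin (n + 1) → Bool) → X} {ν : (Fin (n + 1) → Bool) → Y}
    (hlam : ∀ ω, f (lam ω) = ν ω) {x : X}
    (hx : (fun ω => if ω = topVert (n + 1) then x else lam ω) ∈ CX.C (n + 1)) :
    (fun ω => if ω = topVert (n + 1) then f x else ν ω) ∈ CY.C (n + 1) := by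
  convert hf _ _ hx using 2 with ω
  split_ifs <;> simp [hlam]

end Lifting

/-- If `f : X → Y` is a fibration and `g ∘ f : X → Z` is a fibration, then
`g : Y → Z` is a fibration.  In particular, if `f : X → Y` is a fibration and `X` is fibrant
(has `k`-completion for all `k`), then `Y` is fibrant. -/
theorem fibration_universal_property {X Y Z : Type*} (CX : Cubespace X) (CY : Cubespace Y)
    (CZ : Cubespace Z) (f : X → Y) (g : Y → Z)
    (hf : IsFibration CX CY f) (hgf : IsFibration CX CZ (fun x => g (f x))) :
    IsFibration CY CZ g ∧
      ((∀ n, HasCompletion CX n) → ∀ n, HasCompletion CY n) := by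
  refine ⟨⟨fun k c hc => ?_, fun z => ?_, fun n ν c hν hc hνc => ?_⟩, fun hX n ν hν => ?_⟩
  · obtain ⟨e, he, hfe⟩ := hf.exists_cube_lift hc
    simpa only [hfe] using hgf.1 k e he
  · obtain ⟨x, hx⟩ := hgf.2.1 z
    exact ⟨f x, hx⟩
  · obtain ⟨lam, hlam, hflam⟩ := hf.exists_corner_lift hν
    obtain ⟨x, hx, hxcube⟩ :=
      hgf.2.2 n lam c hlam hc fun ω hω => by simp only [hflam, hνc ω hω]
    exact ⟨f x, hx, hf.1.completion_mem hflam hxcube⟩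
  · obtain ⟨lam, hlam, hflam⟩ := hf.exists_corner_lift hν
    obtain ⟨x, hx⟩ := hX n lam hlam
    exact ⟨f x, hf.1.completion_mem hflam hx⟩
end

section
/- Let G_• be a filtered group and p : Z → G a polynomial sequence, i.e. ∂_{h_i}...∂_{h_1} p(x) ∈ G_i for all i ≥ 0 and all h_1,...,h_i, x ∈ Z, where ∂_h p(x) = p(x+h) p(x)^{-1}. Then for every k ≥ 0 and x, h_1, ..., h_k ∈ Z, the configuration ω ↦ p(x + ∑_{i=1}^k h_i ω_i) on {0,1}^k lies in HK^k(G_•). -/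
/-!
Induction on `k`. Splitting off the last coordinate, the cube of `p` factors as the cube of
`∂_{h_k} p` placed on the upper face `ω_k = 1` times the cube of `p` in dimension `k` extended
constantly in `ω_k`. The derivative `∂_{h_k} p` is polynomial for the shifted filtration
`G_{•+1}`, and the generator `[g]_{F_S}` of `HK^k` lifts to `[g]_{F_{S ∪ {k}}}` on the upper face
and to `[g]_{F_S}` under the constant extension, so both factors lie in `HK^{k+1}(G_•)`.
-/

open Subgroup

/-- `∂_h f`. -/
def dder {G : Type*} [Group G] (h : ℤ) (f : ℤ → G) : ℤ → G :=
  fun x => f (x + h) * (f x)⁻¹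

section

variable {G : Type*} [Group G]

def IsPolynomialSeq (Gf : ℕ → Subgroup G) (p : ℤ → G) : Prop :=
  ∀ (i : ℕ) (hs : Fin i → ℤ) (x : ℤ), ((List.ofFn hs).foldr dder p) x ∈ Gf i

def cubeConfig (p : ℤ → G) {k : ℕ} (x : ℤ) (h : Fin k → ℤ) : (Fin k → Bool) → G :=
  fun ω => p (x + ∑ i, if ω i then h i else 0)

namespace IsPolynomialSeq

variable {Gf : ℕ → Subgroup G} {p : ℤ → G}

theorem mem_zero (hp : IsPolynomialSeq Gf p) (x : ℤ) : p x ∈ Gf 0 :=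
  hp 0 Fin.elim0 x

theorem dder (hp : IsPolynomialSeq Gf p) (h : ℤ) :
    IsPolynomialSeq (fun n => Gf (n + 1)) (dder h p) := by
  intro i hs x
  have hofFn : List.ofFn (Fin.snoc hs h : Fin (i + 1) → ℤ) = List.ofFn hs ++ [h] := by
    rw [List.ofFn_succ']
    simp
  have hderiv := hp (i + 1) (Fin.snoc hs h) x
  rwa [hofFn, List.foldr_append] at hderiv

end IsPolynomialSeq

namespace HostKra

variable {k : ℕ}

def extendConst : ((Fin k → Bool) → G) →* ((Fin (k + 1) → Bool) → G) where
  toFun c ω := c (ω ∘ Fin.castSucc)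
  map_one' := rfl
  map_mul' _ _ := rfl

def extendUpper : ((Fin k → Bool) → G) →* ((Fin (k + 1) → Bool) → G) where
  toFun c ω := if ω (Fin.last k) then c (ω ∘ Fin.castSucc) else 1
  map_one' := by funext ω; simp
  map_mul' a b := by funext ω; by_cases hω : ω (Fin.last k) <;> simp [hω]

theorem extendConst_upperFaceConfig (S : Finset (Fin k)) (g : G) :
    extendConst (upperFaceConfig S g) = upperFaceConfig (S.map Fin.castSuccEmb) g := by
  funext ω
  simp [extendConst, upperFaceConfig]

theorem extendUpper_upperFaceConfig (S : Finset (Fin k)) (g : G) :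
    extendUpper (upperFaceConfig S g) =
      upperFaceConfig (Finset.cons (Fin.last k) (S.map Fin.castSuccEmb)
        (by simp [Fin.castSucc_ne_last])) g := by
  funext ω
  by_cases hω : ω (Fin.last k) <;> simp [extendUpper, upperFaceConfig, hω]

theorem map_extendConst_le (Gf : ℕ → Subgroup G) :
    (hostKra Gf k).map extendConst ≤ hostKra Gf (k + 1) := by
  rw [hostKra, MonoidHom.map_closure, closure_le]
  rintro _ ⟨_, ⟨S, g, hg, rfl⟩, rfl⟩
  exact subset_closure ⟨_, g, by simpa using hg, extendConst_upperFaceConfig S g⟩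

theorem map_extendUpper_le (Gf : ℕ → Subgroup G) :
    (hostKra (fun n => Gf (n + 1)) k).map extendUpper ≤ hostKra Gf (k + 1) := by
  rw [hostKra, MonoidHom.map_closure, closure_le]
  rintro _ ⟨_, ⟨S, g, hg, rfl⟩, rfl⟩
  exact subset_closure ⟨_, g, by simpa using hg, extendUpper_upperFaceConfig S g⟩

end HostKra

open HostKra in
theorem cubeConfig_succ (p : ℤ → G) {k : ℕ} (x : ℤ) (h : Fin (k + 1) → ℤ) :
    cubeConfig p x h =
      extendUpper (cubeConfig (dder (h (Fin.last k)) p) x (h ∘ Fin.castSucc)) *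
        extendConst (cubeConfig p x (h ∘ Fin.castSucc)) := by
  funext ω
  by_cases hω : ω (Fin.last k) <;>
    simp [cubeConfig, extendUpper, extendConst, dder, Fin.sum_univ_castSucc, hω, add_assoc]

theorem IsPolynomialSeq.cubeConfig_mem_hostKra {Gf : ℕ → Subgroup G} {p : ℤ → G}
    (hp : IsPolynomialSeq Gf p) {k : ℕ} (x : ℤ) (h : Fin k → ℤ) :
    cubeConfig p x h ∈ hostKra Gf k := by
  induction k generalizing Gf p with
  | zero =>
    refine subset_closure ⟨∅, p x, by simpa using hp.mem_zero x, ?_⟩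
    funext ω
    simp [cubeConfig, upperFaceConfig]
  | succ k ih =>
    rw [cubeConfig_succ]
    exact mul_mem
      (HostKra.map_extendUpper_le Gf (mem_map_of_mem _ (ih (hp.dder _) _)))
      (HostKra.map_extendConst_le Gf (mem_map_of_mem _ (ih hp _)))

end

theorem polynomial_sequence_maps_cubes_general {G : Type*} [Group G] (Gf : ℕ → Subgroup G)
    (p : ℤ → G)
    (hp : ∀ (i : ℕ) (hs : Fin i → ℤ) (x : ℤ), ((List.ofFn hs).foldr dder p) x ∈ Gf i)
    (k : ℕ) (x : ℤ) (h : Fin k → ℤ) :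
    (fun ω : Fin k → Bool => p (x + ∑ i, if ω i then h i else 0)) ∈ hostKra Gf k :=
  IsPolynomialSeq.cubeConfig_mem_hostKra hp x h

/-- If `p : ℤ → G` is a polynomial sequence with respect to the filtration
`G_•` (all `i`-fold derivatives take values in `G_i`), then for every `k`, `x` and
`h_1, …, h_k`, the configuration `ω ↦ p(x + ∑ h_i ω_i)` lies in `HK^k(G_•)`. -/
theorem polynomial_sequence_maps_cubes {G : Type*} [Group G] (Gf : ℕ → Subgroup G)
    (hf : IsGroupFiltration Gf) (p : ℤ → G)
    (hp : ∀ (i : ℕ) (hs : Fin i → ℤ) (x : ℤ), ((List.ofFn hs).foldr dder p) x ∈ Gf i)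
    (k : ℕ) (x : ℤ) (h : Fin k → ℤ) :
    (fun ω : Fin k → Bool => p (x + ∑ i, if ω i then h i else 0)) ∈ hostKra Gf k :=
  polynomial_sequence_maps_cubes_general Gf p hp k x h
end
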